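/- arXiv:2511.03957 — 7 statements merged into one kernel-verified Lean document; each statement's English description precedes it below -/
import Mathlib

section
/- Let r ≥ 2 be an integer. There exists α0 = α0(r) > 0 such that for every α ∈ (0, α0] there exists ε0 = ε0(r, α) > 0 such that for every ε ∈ (0, ε0] there exists n0 ∈ ℕ with the following property for all n ≥ n0. Suppose G is an n-vertex graph such that the number of r-element subsets of V(G) inducing a complete graph (copies of K_r) is at most ε·n^r, and σ(G) ≥ 2(1 − 1/(r−1) − α)n. Then G admits a √α-independent set of size at least n/(r−1). -/
/-!
Vertices of degree below `(1 - 1/(r-1) - α) n` are pairwise adjacent by the degree-sum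
condition, so they form a clique; since `G` has few copies of `K_r`, this clique has at most
`α n` vertices. Inside the remaining set `W` of high-degree vertices, greedily build a clique
`Q` on `r - 2` vertices: each step keeps the common neighbourhood of `Q` in `W` above
`n / r`, and by averaging the new vertex can be chosen so that the number of copies of `K_r`
through `Q` drops by a factor `r² / n`. In the end the common neighbourhood `C` of `Q` has
about `n/(r-1)` vertices, and every edge inside `C` extends `Q` to a copy of `K_r`, so `C`
spans at most `r^{2(r-2)} ε n²` edges. Padding `C` to `n/(r-1)` vertices adds `O(rαn²)` edges.
-/

open Finset
open scoped Nat

noncomputable def edgesWithin {V : Type*} [Fintype V] [DecidableEq V]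
    (G : SimpleGraph V) [DecidableRel G.Adj] (T : Finset V) : ℕ :=
  (G.edgeFinset.filter (fun e => e ∈ T.sym2)).card

theorem Finset.exists_mem_card_mul_card_filter_mem_le {α : Type*} [DecidableEq α]
    {C : Finset α} (hC : C.Nonempty) {F : Finset (Finset α)} {r : ℕ}
    (hF : ∀ R ∈ F, #R ≤ r) :
    ∃ v ∈ C, #C * #{R ∈ F | v ∈ R} ≤ #F * r := by
  obtain ⟨v, hv, hmin⟩ := C.exists_min_image (fun v => #{R ∈ F | v ∈ R}) hC
  refine ⟨v, hv, ?_⟩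
  calc #C * #{R ∈ F | v ∈ R} ≤ ∑ R ∈ F, #(C ∩ R) := le_sum_card_inter hmin
    _ ≤ ∑ _R ∈ F, r :=
        sum_le_sum fun R hR => (card_le_card inter_subset_right).trans (hF R hR)
    _ = #F * r := by rw [sum_const, smul_eq_mul]

section

variable {V : Type*} [Fintype V] [DecidableEq V] (G : SimpleGraph V) [DecidableRel G.Adj]

theorem edgesWithin_le_edgesWithin_add {S T : Finset V} :
    edgesWithin G T ≤ edgesWithin G S + #(T \ S) * Fintype.card V := by
  have hsub : {e ∈ G.edgeFinset | e ∈ T.sym2} ⊆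
      {e ∈ G.edgeFinset | e ∈ S.sym2} ∪ (T \ S).biUnion fun v => G.incidenceFinset v := by
    intro e he
    simp only [mem_filter, mem_sym2_iff] at he
    by_cases hS : ∀ a ∈ e, a ∈ S
    · exact mem_union_left _ (mem_filter.2 ⟨he.1, mem_sym2_iff.2 hS⟩)
    · push Not at hS
      obtain ⟨a, hae, haS⟩ := hS
      refine mem_union_right _ (mem_biUnion.2 ⟨a, mem_sdiff.2 ⟨he.2 a hae, haS⟩, ?_⟩)
      exact (G.mem_incidenceFinset _ _).2 ⟨G.mem_edgeFinset.1 he.1, hae⟩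
  calc edgesWithin G T
      ≤ edgesWithin G S + #((T \ S).biUnion fun v => G.incidenceFinset v) :=
        (card_le_card hsub).trans (card_union_le _ _)
    _ ≤ edgesWithin G S + ∑ v ∈ T \ S, G.degree v := by
        grw [card_biUnion_le]
        simp only [G.card_incidenceFinset_eq_degree, le_refl]
    _ ≤ edgesWithin G S + #(T \ S) * Fintype.card V := by
        grw [sum_le_card_nsmul _ _ _ fun v _ => (G.degree_lt_card_verts v).le, smul_eq_mul]

theorem exists_card_ge_edgesWithin_le_add (S : Finset V) {x y : ℝ} (hx : 0 ≤ x) (hy : 0 ≤ y)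
    (hxV : x ≤ Fintype.card V) (hxS : x ≤ #S + y) :
    ∃ T : Finset V, x ≤ #T ∧
      (edgesWithin G T : ℝ) ≤ edgesWithin G S + (y + 1) * Fintype.card V := by
  obtain ⟨T, hST, -, hT⟩ := exists_subsuperset_card_eq (subset_univ S)
    (le_max_right ⌈x⌉₊ #S) (by simpa using max_le (Nat.ceil_le.2 hxV) (card_le_univ S))
  have hTS : (#T : ℝ) < #S + y + 1 := by
    rw [hT, Nat.cast_max, max_lt_iff]
    exact ⟨by linarith [Nat.ceil_lt_add_one hx], by linarith⟩
  have hdiff : (#(T \ S) : ℝ) ≤ y + 1 := by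
    have := card_sdiff_add_card_eq_card hST
    rw [← Nat.cast_inj (R := ℝ), Nat.cast_add] at this
    linarith
  refine ⟨T, ?_, ?_⟩
  · rw [hT]
    exact (Nat.le_ceil x).trans (mod_cast le_max_left _ _)
  · calc (edgesWithin G T : ℝ) ≤ edgesWithin G S + #(T \ S) * Fintype.card V := mod_cast
          edgesWithin_le_edgesWithin_add G
      _ ≤ _ := by gcongr

end

namespace SimpleGraph

variable {V : Type*} [Fintype V] {G : SimpleGraph V} [DecidableRel G.Adj]

theorem isClique_filter_degree_lt {D : ℝ}
    (hσ : ∀ x y, x ≠ y → ¬ G.Adj x y → 2 * D ≤ G.degree x + G.degree y) :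
    G.IsClique (({v | G.degree v < D} : Finset V) : Set V) := by
  intro x hx y hy hxy
  simp only [coe_filter, Set.mem_ofPred_eq, mem_univ, true_and] at hx hy
  by_contra hadj
  linarith [hσ x y hxy hadj]

variable [DecidableEq V]

variable (G) in
def commonNbrsIn (W Q : Finset V) : Finset V := {v ∈ W | ∀ u ∈ Q, G.Adj u v}

variable (G) in
def cliquesContaining (r : ℕ) (Q : Finset V) : Finset (Finset V) :=
  {R ∈ G.cliqueFinset r | Q ⊆ R}

theorem IsClique.choose_card_le_card_cliqueFinset {B : Finset V} (hB : G.IsClique (B : Set V))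
    (r : ℕ) : (#B).choose r ≤ #(G.cliqueFinset r) := by
  rw [← card_powersetCard]
  refine card_le_card fun s hs => ?_
  rw [mem_powersetCard] at hs
  exact G.mem_cliqueFinset_iff.2 ⟨hB.subset (coe_subset.2 hs.1), hs.2⟩

theorem IsClique.card_le_of_card_cliqueFinset_lt {B : Finset V} (hB : G.IsClique (B : Set V))
    {r : ℕ} {x : ℝ} (hx : 2 * r ≤ x)
    (hfew : (r ! : ℝ) * #(G.cliqueFinset r) < (x / 2) ^ r) :
    (#B : ℝ) ≤ x := by
  by_contra! hxB
  have hrB : r ≤ #B + 1 := by exact_mod_cast (show (r : ℝ) ≤ #B + 1 by linarith)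
  have hbase : x / 2 ≤ ((#B + 1 - r : ℕ) : ℝ) := by push_cast [hrB]; linarith
  have hchoose := Nat.pow_le_choose (α := ℝ) r #B
  rw [div_le_iff₀ (by positivity)] at hchoose
  refine (lt_irrefl ((x / 2) ^ r)) ?_
  calc (x / 2) ^ r ≤ ((#B + 1 - r : ℕ) : ℝ) ^ r := by gcongr; linarith
    _ ≤ r ! * #(G.cliqueFinset r) := by
        rw [mul_comm]; grw [hchoose]; gcongr; exact hB.choose_card_le_card_cliqueFinset r
    _ < (x / 2) ^ r := hfew

theorem card_sub_le_card_filter_le_degree {r : ℕ} {D x : ℝ}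
    (hσ : ∀ x y, x ≠ y → ¬ G.Adj x y → 2 * D ≤ G.degree x + G.degree y)
    (hx : 2 * r ≤ x) (hfew : (r ! : ℝ) * #(G.cliqueFinset r) < (x / 2) ^ r) :
    Fintype.card V - x ≤ #({v | D ≤ G.degree v} : Finset V) := by
  have hlow := (isClique_filter_degree_lt hσ).card_le_of_card_cliqueFinset_lt hx hfew
  have hsplit := card_filter_add_card_filter_not (s := univ) fun v => D ≤ (G.degree v : ℝ)
  simp only [not_le] at hsplit
  rw [card_univ] at hsplit
  rw [← hsplit]
  push_cast
  linarith

@[simp] theorem commonNbrsIn_empty (W : Finset V) : G.commonNbrsIn W ∅ = W := by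
  simp [commonNbrsIn]

@[simp] theorem cliquesContaining_empty (r : ℕ) :
    G.cliquesContaining r ∅ = G.cliqueFinset r := by
  simp [cliquesContaining]

theorem cliquesContaining_insert (r : ℕ) (v : V) (Q : Finset V) :
    G.cliquesContaining r (insert v Q) = {R ∈ G.cliquesContaining r Q | v ∈ R} := by
  simp only [cliquesContaining, filter_filter, insert_subset_iff, and_comm]

theorem notMem_of_mem_commonNbrsIn {W Q : Finset V} {v : V} (hv : v ∈ G.commonNbrsIn W Q) :
    v ∉ Q := fun hvQ => G.loopless.irrefl v ((mem_filter.1 hv).2 v hvQ)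

theorem card_commonNbrsIn_add_degree_le (W Q : Finset V) (v : V) :
    #(G.commonNbrsIn W Q) + G.degree v ≤ #(G.commonNbrsIn W (insert v Q)) + Fintype.card V := by
  have hsub : G.commonNbrsIn W Q ∩ G.neighborFinset v ⊆ G.commonNbrsIn W (insert v Q) := by
    intro w hw
    simp only [commonNbrsIn, mem_inter, mem_filter, mem_neighborFinset, forall_mem_insert] at hw ⊢
    exact ⟨hw.1.1, hw.2, hw.1.2⟩
  rw [← card_neighborFinset_eq_degree, ← card_inter_add_card_union]
  exact add_le_add (card_le_card hsub) (card_le_univ _)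

theorem exists_isClique_card_commonNbrsIn_ge {W : Finset V} {r : ℕ} {d m : ℝ} (hm : 0 < m)
    (hdeg : ∀ v ∈ W, (Fintype.card V : ℝ) - d ≤ G.degree v) :
    ∀ K : ℕ, (∀ k < K, m ≤ #W - k * d) →
      ∃ Q : Finset V, G.IsClique (Q : Set V) ∧ #Q = K ∧
        #W - K * d ≤ (#(G.commonNbrsIn W Q) : ℝ) ∧
        #(G.cliquesContaining r Q) * m ^ K ≤ (r : ℝ) ^ K * #(G.cliqueFinset r)
  | 0, _ => ⟨∅, by simp⟩
  | K + 1, hWm => by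
    obtain ⟨Q, hQ, hQcard, hC, hF⟩ :=
      exists_isClique_card_commonNbrsIn_ge (r := r) hm hdeg K fun k hk => hWm k (by omega)
    have hmC : m ≤ #(G.commonNbrsIn W Q) := (hWm K K.lt_succ_self).trans hC
    obtain ⟨v, hv, hvF⟩ := exists_mem_card_mul_card_filter_mem_le
      (card_pos.1 (by exact_mod_cast hm.trans_le hmC)) (F := G.cliquesContaining r Q)
      fun R hR => ((G.mem_cliqueFinset_iff.1 (mem_filter.1 hR).1).2).le
    rw [← cliquesContaining_insert] at hvF
    have hvW : v ∈ W := (mem_filter.1 hv).1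
    have hvQ : ∀ u ∈ Q, G.Adj u v := (mem_filter.1 hv).2
    refine ⟨insert v Q, ?_, ?_, ?_, ?_⟩
    · rw [coe_insert, isClique_insert]
      exact ⟨hQ, fun u hu _ => (hvQ u hu).symm⟩
    · rw [card_insert_of_notMem (notMem_of_mem_commonNbrsIn hv), hQcard]
    · have hcard : (#(G.commonNbrsIn W Q) : ℝ) + G.degree v
          ≤ #(G.commonNbrsIn W (insert v Q)) + Fintype.card V :=
        mod_cast G.card_commonNbrsIn_add_degree_le W Q v
      push_cast
      linarith [hdeg v hvW]
    · calc (#(G.cliquesContaining r (insert v Q)) : ℝ) * m ^ (K + 1)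
          = m * (#(G.cliquesContaining r (insert v Q)) * m ^ K) := by ring
        _ ≤ #(G.commonNbrsIn W Q) * (#(G.cliquesContaining r (insert v Q)) * m ^ K) := by gcongr
        _ ≤ (#(G.cliquesContaining r Q) * r : ℕ) * m ^ K := by
            rw [← mul_assoc]; gcongr; exact_mod_cast hvF
        _ = r * (#(G.cliquesContaining r Q) * m ^ K) := by push_cast; ring
        _ ≤ (r : ℝ) ^ (K + 1) * #(G.cliqueFinset r) := by
            rw [pow_succ', mul_assoc]; gcongr

theorem edgesWithin_commonNbrsIn_le {W Q : Finset V} (hQ : G.IsClique (Q : Set V)) :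
    edgesWithin G (G.commonNbrsIn W Q) ≤ #(G.cliquesContaining (#Q + 2) Q) := by
  have hdisj : ∀ e ∈ G.edgeFinset.filter (· ∈ (G.commonNbrsIn W Q).sym2),
      Disjoint Q e.toFinset := by
    intro e he
    refine disjoint_right.2 fun v hv => notMem_of_mem_commonNbrsIn (G := G) (W := W) ?_
    exact mem_sym2_iff.1 (mem_filter.1 he).2 v (Sym2.mem_toFinset.1 hv)
  refine card_le_card_of_injOn (fun e => Q ∪ e.toFinset) ?_ ?_
  · intro e he
    simp only [coe_filter, Set.mem_ofPred_eq, mem_edgeFinset, mem_sym2_iff] at he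
    induction e with
    | _ a b =>
      obtain ⟨hab, hC⟩ := he
      have ha := hC a (Sym2.mem_mk_left a b)
      have hb := hC b (Sym2.mem_mk_right a b)
      have hbQ : ∀ u ∈ Q, G.Adj b u := fun u hu => ((mem_filter.1 hb).2 u hu).symm
      have haQ : ∀ u ∈ insert b Q, G.Adj a u :=
        forall_mem_insert .. |>.2 ⟨hab, fun u hu => ((mem_filter.1 ha).2 u hu).symm⟩
      have hclique : G.IsNClique (#Q + 2) (insert a (insert b Q)) :=
        ((IsNClique.mk hQ rfl).insert hbQ).insert haQ
      dsimp only
      rw [Sym2.toFinset_mk_eq, mem_coe, cliquesContaining, mem_filter, mem_cliqueFinset_iff]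
      refine ⟨?_, subset_union_left⟩
      convert hclique using 1
      grind
  · intro e₁ he₁ e₂ he₂ h
    have h' : e₁.toFinset = e₂.toFinset := by
      rw [← union_sdiff_cancel_left (hdisj e₁ he₁),
        ← union_sdiff_cancel_left (hdisj e₂ he₂)]
      exact congrArg (· \ Q) h
    exact Sym2.ext fun x => by rw [← Sym2.mem_toFinset, h', Sym2.mem_toFinset]

theorem exists_large_sparse_commonNbrsIn [Nonempty V] {W : Finset V} {r : ℕ} (hr : 2 ≤ r)
    {α s : ℝ} (hα : 0 < α) (hrα : r ^ 2 * α ≤ 1) (hW : Fintype.card V - α * Fintype.card V ≤ #W)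
    (hdeg : ∀ v ∈ W, (1 - 1 / ((r : ℝ) - 1) - α) * Fintype.card V ≤ G.degree v)
    (hsparse : ((r : ℝ) ^ 2) ^ (r - 2) * #(G.cliqueFinset r) ≤ s * Fintype.card V ^ r) :
    ∃ C : Finset V, (1 / ((r : ℝ) - 1) - (r - 1) * α) * Fintype.card V ≤ #C ∧
      (edgesWithin G C : ℝ) ≤ s * Fintype.card V ^ 2 := by
  set N : ℝ := (Fintype.card V : ℝ)
  set t : ℝ := 1 / ((r : ℝ) - 1)
  have hr' : (2 : ℝ) ≤ r := by exact_mod_cast hr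
  have ht : ((r : ℝ) - 1) * t = 1 := mul_one_div_cancel (by linarith)
  have ht0 : 0 < t := div_pos one_pos (by linarith)
  have hN : 0 < N := by simp [N, Fintype.card_pos]
  have hWm : ∀ k < r - 2, N / r ≤ #W - k * ((t + α) * N) := by
    intro k hk
    have hk' : (k : ℝ) + 3 ≤ r := by exact_mod_cast (show k + 3 ≤ r by omega)
    have hd : 0 ≤ (t + α) * N := by positivity
    have hkey : 1 / (r : ℝ) ≤ 2 * t - (r - 2) * α := by
      rw [div_le_iff₀ (by positivity)]
      nlinarith [ht, hrα, ht0]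
    calc N / r = 1 / r * N := by ring
      _ ≤ (2 * t - (r - 2) * α) * N := by gcongr
      _ = N - α * N - (r - 3) * ((t + α) * N) := by linear_combination N * ht
      _ ≤ #W - k * ((t + α) * N) := by
          linarith [mul_le_mul_of_nonneg_right (show (k : ℝ) ≤ r - 3 by linarith) hd]
  obtain ⟨Q, hQ, hQcard, hC, hF⟩ := exists_isClique_card_commonNbrsIn_ge (r := r)
    (by positivity) (fun v hv => by linarith [hdeg v hv]) (r - 2) hWm
  have hr2 : ((r - 2 : ℕ) : ℝ) = r - 2 := by push_cast [hr]; ring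
  refine ⟨G.commonNbrsIn W Q, ?_, ?_⟩
  · rw [hr2] at hC
    linear_combination hC + hW + N * ht
  · have hE := edgesWithin_commonNbrsIn_le (W := W) hQ
    rw [hQcard, Nat.sub_add_cancel hr] at hE
    have hFN : (#(G.cliquesContaining r Q) : ℝ) * N ^ (r - 2) ≤ s * N ^ 2 * N ^ (r - 2) :=
      calc (#(G.cliquesContaining r Q) : ℝ) * N ^ (r - 2)
          = #(G.cliquesContaining r Q) * (N / r) ^ (r - 2) * (r : ℝ) ^ (r - 2) := by
            rw [mul_assoc, ← mul_pow, div_mul_cancel₀ _ (by positivity)]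
        _ ≤ (r : ℝ) ^ (r - 2) * #(G.cliqueFinset r) * (r : ℝ) ^ (r - 2) := by gcongr
        _ = ((r : ℝ) ^ 2) ^ (r - 2) * #(G.cliqueFinset r) := by ring
        _ ≤ s * N ^ r := hsparse
        _ = s * N ^ 2 * N ^ (r - 2) := by rw [mul_assoc, ← pow_add, Nat.add_sub_cancel' hr]
    exact (Nat.cast_le.2 hE).trans (le_of_mul_le_mul_right hFN (by positivity))

theorem exists_nearly_large_sparse_set {r : ℕ} (hr : 2 ≤ r) {α s : ℝ} (hα : 0 < α)
    (hrα : r ^ 2 * α ≤ 1) (hαN : 2 * r ≤ α * Fintype.card V)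
    (hfew : (r ! : ℝ) * #(G.cliqueFinset r) < (α * Fintype.card V / 2) ^ r)
    (hsparse : ((r : ℝ) ^ 2) ^ (r - 2) * #(G.cliqueFinset r) ≤ s * Fintype.card V ^ r)
    (hσ : ∀ x y, x ≠ y → ¬ G.Adj x y →
      2 * (1 - 1 / ((r : ℝ) - 1) - α) * Fintype.card V ≤ G.degree x + G.degree y) :
    ∃ C : Finset V, (1 / ((r : ℝ) - 1) - (r - 1) * α) * Fintype.card V ≤ #C ∧
      (edgesWithin G C : ℝ) ≤ s * Fintype.card V ^ 2 := by
  have hr' : (2 : ℝ) ≤ r := by exact_mod_cast hr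
  have hN : (0 : ℝ) < Fintype.card V := by nlinarith
  have : Nonempty V := Fintype.card_pos_iff.1 (by exact_mod_cast hN)
  exact exists_large_sparse_commonNbrsIn hr hα hrα
    (card_sub_le_card_filter_le_degree (fun x y hxy h => by linarith [hσ x y hxy h]) hαN hfew)
    (fun v hv => (mem_filter.1 hv).2) hsparse

end SimpleGraph

theorem mul_le_sqrt_div_four {r α : ℝ} (hr : 0 ≤ r) (hα : 0 ≤ α) (h : (4 * r) ^ 2 * α ≤ 1) :
    r * α ≤ √α / 4 := by
  have h' : 4 * r * √α ≤ 1 := by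
    rw [← Real.sqrt_sq (by positivity : 0 ≤ 4 * r), ← Real.sqrt_mul (by positivity)]
    exact Real.sqrt_le_one.2 h
  nlinarith [Real.mul_self_sqrt hα, Real.sqrt_nonneg α]

/-- Let `r ≥ 2`. There exists `α0 = α0(r) > 0` such that for every `α ∈ (0, α0]` there
exists `ε0 = ε0(r, α) > 0` such that for every `ε ∈ (0, ε0]` there exists `n0` such that
for all `n ≥ n0`: if `G` is an `n`-vertex graph containing at most `ε·n^r` copies of `K_r`
and `σ(G) ≥ 2(1 - 1/(r-1) - α)n`, then `G` admits a `√α`-independent set of size at least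
`n/(r-1)`. -/
theorem statement6 (r : ℕ) (hr : 2 ≤ r) :
    ∃ α0 : ℝ, 0 < α0 ∧ ∀ α : ℝ, 0 < α → α ≤ α0 →
      ∃ ε0 : ℝ, 0 < ε0 ∧ ∀ ε : ℝ, 0 < ε → ε ≤ ε0 →
        ∃ n0 : ℕ, ∀ n : ℕ, n0 ≤ n →
          ∀ (G : SimpleGraph (Fin n)) [DecidableRel G.Adj],
            ((G.cliqueFinset r).card : ℝ) ≤ ε * (n : ℝ) ^ r →
            (∀ x y : Fin n, x ≠ y → ¬ G.Adj x y →
              2 * (1 - 1 / ((r : ℝ) - 1) - α) * (n : ℝ) ≤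
                (G.degree x : ℝ) + (G.degree y : ℝ)) →
            ∃ T : Finset (Fin n), (n : ℝ) / ((r : ℝ) - 1) ≤ (T.card : ℝ) ∧
              (edgesWithin G T : ℝ) ≤ Real.sqrt α * (n : ℝ) ^ 2 := by
  have hr' : (2 : ℝ) ≤ r := by exact_mod_cast hr
  refine ⟨1 / (4 * r) ^ 2, by positivity, fun α hα hα0 => ?_⟩
  have hrα : (4 * r) ^ 2 * α ≤ 1 := by rwa [le_div_iff₀' (by positivity)] at hα0
  have hsqrt := mul_le_sqrt_div_four (by positivity) hα.le hrα
  refine ⟨min (√α / 4 / ((r : ℝ) ^ 2) ^ (r - 2)) ((α / 2) ^ r / (2 * r !)), by positivity,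
    fun ε _ hε0 => ⟨⌈2 * r / α⌉₊, fun n hn G _ hKr hσ => ?_⟩⟩
  have hαn : 2 * r ≤ α * n := by
    have := Nat.ceil_le.1 hn
    rw [div_le_iff₀ hα] at this
    linarith
  have hfew : (r ! : ℝ) * #(G.cliqueFinset r) < (α * n / 2) ^ r :=
    calc (r ! : ℝ) * #(G.cliqueFinset r) ≤ r ! * ((α / 2) ^ r / (2 * r !) * n ^ r) := by
          grw [hKr, hε0, min_le_right]
      _ = (α * n / 2) ^ r / 2 := by field_simp; ring
      _ < (α * n / 2) ^ r := half_lt_self (pow_pos (by linarith) r)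
  have hsparse : ((r : ℝ) ^ 2) ^ (r - 2) * #(G.cliqueFinset r) ≤ √α / 4 * n ^ r :=
    calc ((r : ℝ) ^ 2) ^ (r - 2) * #(G.cliqueFinset r)
        ≤ ((r : ℝ) ^ 2) ^ (r - 2) * (√α / 4 / ((r : ℝ) ^ 2) ^ (r - 2) * n ^ r) := by
          grw [hKr, hε0, min_le_left]
      _ = √α / 4 * n ^ r := by field_simp
  obtain ⟨C, hC, hCedges⟩ := G.exists_nearly_large_sparse_set hr hα (by nlinarith)
    (by simpa using hαn) (by simpa using hfew) (by simpa using hsparse) (by simpa using hσ)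
  simp only [Fintype.card_fin] at hC hCedges
  obtain ⟨T, hT, hTedges⟩ := exists_card_ge_edgesWithin_le_add G C (x := n / (r - 1))
    (y := (r - 1) * α * n) (div_nonneg n.cast_nonneg (by linarith))
    (mul_nonneg (mul_nonneg (by linarith) hα.le) n.cast_nonneg)
    (by simpa using div_le_self n.cast_nonneg (by linarith))
    (by linarith [show (n : ℝ) / (r - 1) = 1 / (r - 1) * n by ring])
  simp only [Fintype.card_fin] at hTedges
  have hpad : ((r - 1) * α * n + 1) * n ≤ √α / 4 * n ^ 2 := by
    nlinarith [mul_le_mul_of_nonneg_right hsqrt (sq_nonneg (n : ℝ)),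
      mul_le_mul_of_nonneg_right hαn n.cast_nonneg]
  refine ⟨T, hT, ?_⟩
  linarith [mul_nonneg (Real.sqrt_nonneg α) (sq_nonneg (n : ℝ))]
end

section
/- Let r ≥ 3 be an integer. There exists α0 = α0(r) > 0 such that for every α ∈ (0, α0] there exists n0 ∈ ℕ with the following property for all n ≥ n0. If G is an n-vertex graph containing no copy of K_r (i.e., no r vertices of G induce a complete graph) and σ(G) ≥ 2(1 − 1/(r−1) − 2α)n, then G contains an independent set of size at least (1/(r−1) − 3rα)n. -/
/-!
Let `K = r - 1` and call a vertex high if its degree is at least `d = (1 - 1/K - 2α) n`. By the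
σ-condition the low vertices form a clique, so all but at most `K` vertices are high. Take a
maximal clique `C` among the high vertices: every high vertex misses some vertex of `C`, while
each vertex of `C` misses at most `n - d` vertices. Double counting these non-adjacencies forces
`|C| = K` and shows that almost all high vertices miss exactly one vertex of `C`. Those that miss
a given `v ∈ C` are adjacent to all of `C \ {v}`, hence pairwise non-adjacent since `G` is
`K_r`-free, and for the best choice of `v` there are about `n / K` of them.
-/

open Finset

theorem Finset.two_mul_card_le_sum_add_card_filter_le_one {ι : Type*} (s : Finset ι)
    {f : ι → ℕ} (h : ∀ i ∈ s, 1 ≤ f i) : 2 * #s ≤ ∑ i ∈ s, f i + #{i ∈ s | f i ≤ 1} := by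
  rw [card_filter, ← sum_add_distrib, mul_comm, ← smul_eq_mul, ← sum_const]
  exact sum_le_sum fun i hi => by have := h i hi; split_ifs <;> omega

theorem sub_one_mul_sub_lt_sub_of_le_one_div_four_sq {K α N : ℝ} (hK : 1 ≤ K) (hα : 0 < α)
    (hα0 : α ≤ 1 / (4 * K ^ 2)) (hαN : 1 ≤ α * N) :
    (K - 1) * (N - (1 - 1 / K - 2 * α) * N) < N - K := by
  have hK0 : 0 < K := by linarith
  rw [le_div_iff₀ (by positivity)] at hα0
  have hexpand :
      (K - 1) * (N - (1 - 1 / K - 2 * α) * N) = N - N / K + 2 * (K - 1) * (α * N) := by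
    field_simp
    ring
  have hhalf : N / K = N / (2 * K) + N / (2 * K) := by
    field_simp
    ring
  have hαN_le : 2 * K * (α * N) ≤ N / (2 * K) := by
    rw [le_div_iff₀ (by positivity)]
    nlinarith
  have hK_le : 2 * K ≤ N / (2 * K) := by
    rw [le_div_iff₀ (by positivity)]
    nlinarith
  nlinarith

theorem le_of_two_mul_sub_sub_le_mul {K α N s : ℝ} (hK : 1 ≤ K) (hαN : 1 ≤ α * N)
    (h : 2 * (N - K) - K * (N - (1 - 1 / K - 2 * α) * N) ≤ K * s) :
    (1 / K - 3 * (K + 1) * α) * N ≤ s := by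
  have hK0 : 0 < K := by linarith
  have hexpand :
      2 * (N - K) - K * (N - (1 - 1 / K - 2 * α) * N) = N - 2 * K - 2 * K * (α * N) := by
    field_simp
    ring
  have hscale : K * ((1 / K - 3 * (K + 1) * α) * N) = N - 3 * K * (K + 1) * (α * N) := by
    field_simp
  rw [← mul_le_mul_iff_of_pos_left hK0, hscale]
  nlinarith [mul_nonneg hK0.le (sub_nonneg.2 hαN),
    mul_nonneg (mul_nonneg hK0.le (by linarith : 0 ≤ α * N)) (sub_nonneg.2 hK)]

namespace SimpleGraph

section Clique

variable {V : Type*} {G : SimpleGraph V}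

theorem IsClique.card_le_of_cliqueFree {k : ℕ} (hfree : G.CliqueFree (k + 1)) {s : Finset V}
    (hs : G.IsClique (s : Set V)) : #s ≤ k := by
  by_contra! h
  obtain ⟨t, hts, ht⟩ := exists_subset_card_eq h
  exact hfree t ⟨hs.subset (by simpa using hts), ht⟩

theorem CliqueFree.not_adj_of_forall_adj {T : Finset V} (hfree : G.CliqueFree (#T + 2))
    (hT : G.IsClique (T : Set V)) {u w : V} (hu : ∀ x ∈ T, G.Adj u x)
    (hw : ∀ x ∈ T, G.Adj w x) : ¬G.Adj u w := fun huw => by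
  classical
  exact hfree _ <|
    (IsNClique.insert ⟨hT, rfl⟩ hw).insert ((forall_mem_insert _ _ _).2 ⟨huw, hu⟩)

theorem exists_isClique_subset_forall_exists_not_adj (H : Finset V) :
    ∃ C ⊆ H, G.IsClique (C : Set V) ∧ ∀ u ∈ H, ∃ v ∈ C, ¬G.Adj u v := by
  classical
  obtain ⟨C, hC, hmax⟩ := exists_max_image
    (H.powerset.filter fun s : Finset V => G.IsClique (s : Set V)) card ⟨∅, by simp⟩
  rw [mem_filter, mem_powerset] at hC
  refine ⟨C, hC.1, hC.2, fun u hu => ?_⟩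
  by_contra! hadj
  have huC : u ∉ C := fun h => G.irrefl (hadj u h)
  have hins : insert u C ∈ H.powerset.filter fun s : Finset V => G.IsClique (s : Set V) := by
    rw [mem_filter, mem_powerset, coe_insert]
    exact ⟨insert_subset hu hC.1, hC.2.insert fun b hb _ => hadj b hb⟩
  have := hmax _ hins
  rw [card_insert_of_notMem huC] at this
  omega

variable [DecidableRel G.Adj]

theorem adj_of_card_filter_not_adj_le_one {C : Finset V} {u v x : V}
    (hu : #{y ∈ C | ¬G.Adj u y} ≤ 1) (hv : v ∈ C) (huv : ¬G.Adj u v) (hx : x ∈ C)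
    (hxv : x ≠ v) : G.Adj u x := by
  by_contra hux
  exact hxv (card_le_one.1 hu x (by simp [hx, hux]) v (by simp [hv, huv]))

theorem exists_card_le_mul_card_filter_not_adj {C S : Finset V} (hC : C.Nonempty)
    (hcov : ∀ u ∈ S, ∃ v ∈ C, ¬G.Adj u v) : ∃ v ∈ C, #S ≤ #C * #{u ∈ S | ¬G.Adj u v} := by
  classical
  obtain ⟨v, hv, hmax⟩ := exists_max_image C (fun v => #{u ∈ S | ¬G.Adj u v}) hC
  refine ⟨v, hv, le_trans (card_le_card fun u hu => ?_) (card_biUnion_le_card_mul C _ _ hmax)⟩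
  obtain ⟨x, hx, hux⟩ := hcov u hu
  exact mem_biUnion.2 ⟨x, hx, mem_filter.2 ⟨hu, hux⟩⟩

theorem CliqueFree.not_adj_of_card_filter_not_adj_le_one {k : ℕ} (hfree : G.CliqueFree (k + 1))
    {C : Finset V} (hC : G.IsClique (C : Set V)) (hCk : #C = k) {u w v : V} (hv : v ∈ C)
    (hu : #{y ∈ C | ¬G.Adj u y} ≤ 1) (huv : ¬G.Adj u v)
    (hw : #{y ∈ C | ¬G.Adj w y} ≤ 1) (hwv : ¬G.Adj w v) : ¬G.Adj u w := by
  classical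
  have hT : #(C.erase v) + 2 = k + 1 := by
    rw [card_erase_of_mem hv, hCk]
    have := card_pos.2 ⟨v, hv⟩
    omega
  exact (hT ▸ hfree).not_adj_of_forall_adj (hC.subset (by simp))
    (fun x hx => adj_of_card_filter_not_adj_le_one hu hv huv (mem_of_mem_erase hx)
      (ne_of_mem_erase hx))
    (fun x hx => adj_of_card_filter_not_adj_le_one hw hv hwv (mem_of_mem_erase hx)
      (ne_of_mem_erase hx))

end Clique

section Degree

variable {V : Type*} [Fintype V] {G : SimpleGraph V} [DecidableRel G.Adj]

theorem card_filter_not_adj_add_degree_le (s : Finset V) (v : V) :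
    #{u ∈ s | ¬G.Adj u v} + G.degree v ≤ Fintype.card V := by
  rw [← card_neighborFinset_eq_degree, neighborFinset_eq_filter, ← card_univ,
    ← card_filter_add_card_filter_not (s := univ) (G.Adj v),
    add_comm (#{u ∈ univ | G.Adj v u})]
  gcongr
  intro u
  simp [adj_comm]

theorem sub_le_card_filter_le_degree {k : ℕ} (hfree : G.CliqueFree (k + 1)) {d : ℝ}
    (hσ : ∀ x y, x ≠ y → ¬G.Adj x y → 2 * d ≤ (G.degree x : ℝ) + G.degree y) :
    (Fintype.card V : ℝ) - k ≤ #{x | d ≤ (G.degree x : ℝ)} := by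
  have hlow : G.IsClique ({x | ¬d ≤ (G.degree x : ℝ)} : Finset V) := by
    intro x hx y hy hxy
    simp only [coe_filter, mem_univ, true_and, Set.mem_ofPred_eq, not_le] at hx hy
    by_contra hadj
    linarith [hσ x y hxy hadj]
  have hsplit := card_filter_add_card_filter_not (s := univ) (fun x => d ≤ (G.degree x : ℝ))
  rw [card_univ] at hsplit
  have hlow_card := hlow.card_le_of_cliqueFree hfree
  rw [sub_le_iff_le_add]
  exact_mod_cast (by omega : Fintype.card V ≤ _ + k)

theorem sum_card_filter_not_adj_le (H C : Finset V) {d : ℝ}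
    (hC : ∀ v ∈ C, d ≤ (G.degree v : ℝ)) :
    ((∑ u ∈ H, #{v ∈ C | ¬G.Adj u v} : ℕ) : ℝ) ≤ #C * (Fintype.card V - d) := by
  have hswap : ∑ u ∈ H, #{v ∈ C | ¬G.Adj u v} = ∑ v ∈ C, #{u ∈ H | ¬G.Adj u v} := by
    simp only [card_filter]
    exact sum_comm
  rw [hswap, Nat.cast_sum, ← nsmul_eq_mul, ← sum_const]
  refine sum_le_sum fun v hv => ?_
  have hcount : ((#{u ∈ H | ¬G.Adj u v} + G.degree v : ℕ) : ℝ) ≤ Fintype.card V := by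
    exact_mod_cast card_filter_not_adj_add_degree_le H v
  push_cast at hcount
  linarith [hC v hv]

theorem exists_indep_of_cliqueFree_of_degree_add_ge {k : ℕ} (hk : 0 < k)
    (hfree : G.CliqueFree (k + 1)) {d : ℝ} (hd : d ≤ Fintype.card V)
    (hσ : ∀ x y, x ≠ y → ¬G.Adj x y → 2 * d ≤ (G.degree x : ℝ) + G.degree y)
    (hdk : (k - 1) * (Fintype.card V - d) < (Fintype.card V : ℝ) - k) :
    ∃ S : Finset V, (∀ u ∈ S, ∀ w ∈ S, ¬G.Adj u w) ∧
      2 * ((Fintype.card V : ℝ) - k) - k * (Fintype.card V - d) ≤ k * #S := by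
  classical
  set H : Finset V := {x | d ≤ (G.degree x : ℝ)}
  have hH := sub_le_card_filter_le_degree hfree hσ
  obtain ⟨C, hCH, hC, hcov⟩ := exists_isClique_subset_forall_exists_not_adj (G := G) H
  have hm : ∀ u ∈ H, 1 ≤ #{v ∈ C | ¬G.Adj u v} := fun u hu => by
    obtain ⟨v, hv, huv⟩ := hcov u hu
    exact card_pos.2 ⟨v, mem_filter.2 ⟨hv, huv⟩⟩
  have hsum := sum_card_filter_not_adj_le H C fun v hv => (mem_filter.1 (hCH hv)).2
  -- The non-neighbourhoods of the vertices of `C` cover `H`, so `C` cannot be small.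
  have hCk : #C = k := by
    refine le_antisymm (hC.card_le_of_cliqueFree hfree) ?_
    by_contra! hCk
    have hHm : (#H : ℝ) ≤ ((∑ u ∈ H, #{v ∈ C | ¬G.Adj u v} : ℕ) : ℝ) := by
      exact_mod_cast (by simpa using card_nsmul_le_sum H _ 1 hm)
    have hCk' : (#C : ℝ) ≤ k - 1 := by
      have : ((#C + 1 : ℕ) : ℝ) ≤ k := by exact_mod_cast (by omega : #C + 1 ≤ k)
      push_cast at this
      linarith
    linarith [mul_le_mul_of_nonneg_right hCk' (sub_nonneg.2 hd)]
  set Good : Finset V := {u ∈ H | #{v ∈ C | ¬G.Adj u v} ≤ 1}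
  have hGood : 2 * ((Fintype.card V : ℝ) - k) - k * (Fintype.card V - d) ≤ #Good := by
    have hcount : ((2 * #H : ℕ) : ℝ) ≤ ((∑ u ∈ H, #{v ∈ C | ¬G.Adj u v} + #Good : ℕ) : ℝ) := by
      exact_mod_cast two_mul_card_le_sum_add_card_filter_le_one H hm
    push_cast at hcount hsum
    rw [hCk] at hsum
    linarith
  obtain ⟨v, hv, hpigeon⟩ := exists_card_le_mul_card_filter_not_adj (S := Good)
    (card_pos.1 (hCk ▸ hk)) fun u hu => hcov u (mem_filter.1 hu).1
  refine ⟨{u ∈ Good | ¬G.Adj u v}, fun u hu w hw => ?_, ?_⟩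
  · simp only [Good, mem_filter] at hu hw
    exact hfree.not_adj_of_card_filter_not_adj_le_one hC hCk hv hu.1.2 hu.2 hw.1.2 hw.2
  · rw [hCk] at hpigeon
    have : (#Good : ℝ) ≤ k * #{u ∈ Good | ¬G.Adj u v} := by exact_mod_cast hpigeon
    linarith

theorem exists_indep_of_cliqueFree_of_sigma_ge {r : ℕ} (hr : 2 ≤ r) (hfree : G.CliqueFree r)
    {α : ℝ} (hα : 0 < α) (hα0 : α ≤ 1 / (4 * ((r : ℝ) - 1) ^ 2))
    (hαN : 1 ≤ α * Fintype.card V)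
    (hσ : ∀ x y, x ≠ y → ¬G.Adj x y →
      2 * (1 - 1 / ((r : ℝ) - 1) - 2 * α) * Fintype.card V ≤ (G.degree x : ℝ) + G.degree y) :
    ∃ S : Finset V, (1 / ((r : ℝ) - 1) - 3 * r * α) * Fintype.card V ≤ #S ∧
      ∀ u ∈ S, ∀ w ∈ S, ¬G.Adj u w := by
  obtain ⟨k, rfl⟩ : ∃ k, r = k + 1 := ⟨r - 1, by omega⟩
  have hK : ((k + 1 : ℕ) : ℝ) - 1 = k := by push_cast; ring
  have hk : (1 : ℝ) ≤ k := by exact_mod_cast (by omega : 1 ≤ k)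
  rw [hK] at hα0 hσ
  rw [hK, Nat.cast_succ]
  have hd : (1 - 1 / (k : ℝ) - 2 * α) * Fintype.card V ≤ Fintype.card V := by
    have : 0 ≤ (1 / (k : ℝ) + 2 * α) * Fintype.card V := by positivity
    linarith
  obtain ⟨S, hS, hcard⟩ := exists_indep_of_cliqueFree_of_degree_add_ge (by omega) hfree hd
    (fun x y hxy hadj => mul_assoc (2 : ℝ) _ _ ▸ hσ x y hxy hadj)
    (sub_one_mul_sub_lt_sub_of_le_one_div_four_sq hk hα hα0 hαN)
  exact ⟨S, le_of_two_mul_sub_sub_le_mul hk hαN hcard, hS⟩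

end Degree

end SimpleGraph

/-- Let `r ≥ 3`. There exists `α0 = α0(r) > 0` such that for every `α ∈ (0, α0]` there
exists `n0` such that for all `n ≥ n0`: if `G` is an `n`-vertex `K_r`-free graph with
`σ(G) ≥ 2(1 - 1/(r-1) - 2α)n`, then `G` contains an independent set of size at least
`(1/(r-1) - 3rα)n`. -/
theorem statement7 (r : ℕ) (hr : 3 ≤ r) :
    ∃ α0 : ℝ, 0 < α0 ∧ ∀ α : ℝ, 0 < α → α ≤ α0 →
      ∃ n0 : ℕ, ∀ n : ℕ, n0 ≤ n →
        ∀ (G : SimpleGraph (Fin n)) [DecidableRel G.Adj],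
          G.CliqueFree r →
          (∀ x y : Fin n, x ≠ y → ¬ G.Adj x y →
            2 * (1 - 1 / ((r : ℝ) - 1) - 2 * α) * (n : ℝ) ≤
              (G.degree x : ℝ) + (G.degree y : ℝ)) →
          ∃ S : Finset (Fin n),
            (1 / ((r : ℝ) - 1) - 3 * (r : ℝ) * α) * (n : ℝ) ≤ (S.card : ℝ) ∧
            ∀ u ∈ S, ∀ v ∈ S, ¬ G.Adj u v := by
  have hr1 : (0 : ℝ) < r - 1 := by
    have : (3 : ℝ) ≤ r := by exact_mod_cast hr
    linarith
  refine ⟨1 / (4 * ((r : ℝ) - 1) ^ 2), by positivity, fun α hα hα0 => ⟨⌈1 / α⌉₊, ?_⟩⟩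
  intro n hn G _ hfree hσ
  have hαn : 1 ≤ α * Fintype.card (Fin n) := by
    rw [Fintype.card_fin, ← div_le_iff₀' hα]
    exact Nat.ceil_le.1 hn
  simpa using SimpleGraph.exists_indep_of_cliqueFree_of_sigma_ge (by omega) hfree hα hα0 hαn
    (by simpa using hσ)
end

section
/- Let G be a graph, let M be a maximum matching of G, and let x and y be two distinct vertices of G that are not covered by M. For a vertex v not covered by M, define SN(v) := {z ∈ V(M) : there exists w ∈ N(v) with wz ∈ M}, where V(M) denotes the set of vertices covered by M. Then no edge of G joins a vertex of SN(x) to a vertex of SN(y); that is, for every u ∈ SN(x) and every v ∈ SN(y), uv ∉ E(G). -/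
lemma aux_partner_eq {V : Type*} {G : SimpleGraph V} {M : G.Subgraph}
    (hM : M.IsMatching) {a b c : V} (hab : M.Adj a b) (hac : M.Adj a c) : b = c := by
  obtain ⟨w, _, huniq⟩ := hM (M.edge_vert hab)
  rw [huniq b hab, huniq c hac]

lemma aux_del_matching {V : Type*} {G : SimpleGraph V} {M : G.Subgraph}
    (hM : M.IsMatching) {S : Set V}
    (hcl : ∀ a b, a ∈ S → M.Adj a b → b ∈ S) :
    (M.deleteVerts S).IsMatching := by
  intro w hw
  rw [SimpleGraph.Subgraph.deleteVerts_verts] at hw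
  obtain ⟨z, hz, huniq⟩ := hM hw.1
  have hzS : z ∉ S := fun h => hw.2 (hcl z w h hz.symm)
  refine ⟨z, ?_, ?_⟩
  · show (M.deleteVerts S).Adj w z
    rw [SimpleGraph.Subgraph.deleteVerts_adj]
    exact ⟨hw.1, hw.2, M.edge_vert hz.symm, hzS, hz⟩
  · intro t ht
    have ht' : (M.deleteVerts S).Adj w t := ht
    rw [SimpleGraph.Subgraph.deleteVerts_adj] at ht'
    exact huniq t ht'.2.2.2.2

lemma aux_del_edge {V : Type*} {G : SimpleGraph V} {M : G.Subgraph}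
    (hM : M.IsMatching) {a b : V} (hab : M.Adj a b) :
    (M.deleteVerts {a, b}).edgeSet = M.edgeSet \ {s(a, b)} := by
  ext e
  induction e with
  | _ c d =>
    simp only [SimpleGraph.Subgraph.mem_edgeSet, SimpleGraph.Subgraph.deleteVerts_adj,
      Set.mem_diff, Set.mem_singleton_iff, Set.mem_insert_iff]
    constructor
    · rintro ⟨hcM, hcS, hdM, hdS, hcd⟩
      refine ⟨hcd, fun h => ?_⟩
      rw [Sym2.eq_iff] at h
      rcases h with ⟨rfl, rfl⟩ | ⟨rfl, rfl⟩
      · exact hcS (Or.inl rfl)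
      · exact hcS (Or.inr rfl)
    · rintro ⟨hcd, hne⟩
      have hc : ¬ (c = a ∨ c = b) := by
        rintro (rfl | rfl)
        · exact hne (by rw [← aux_partner_eq hM hab hcd])
        · exact hne (by rw [← aux_partner_eq hM hab.symm hcd]; exact (Sym2.eq_swap).symm)
      have hd : ¬ (d = a ∨ d = b) := by
        rintro (rfl | rfl)
        · exact hne (by rw [← aux_partner_eq hM hab hcd.symm]; exact (Sym2.eq_swap))
        · exact hne (by rw [← aux_partner_eq hM hab.symm hcd.symm])
      exact ⟨M.edge_vert hcd, hc, M.edge_vert hcd.symm, hd, hcd⟩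

/-- Let `M` be a maximum matching of a graph `G`, and let `x` and `y` be two distinct
vertices not covered by `M`. For a vertex `v` not covered by `M`, let
`SN(v) = {z ∈ V(M) : ∃ w ∈ N(v), wz ∈ M}`. Then no edge of `G` joins a vertex of `SN(x)`
to a vertex of `SN(y)`. -/
theorem statement8 {V : Type*} [Fintype V] (G : SimpleGraph V) (M : G.Subgraph)
    (hM : M.IsMatching)
    (hmax : ∀ M' : G.Subgraph, M'.IsMatching → M'.edgeSet.ncard ≤ M.edgeSet.ncard)
    (x y : V) (hxy : x ≠ y) (hx : x ∉ M.verts) (hy : y ∉ M.verts)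
    (u v : V)
    (hu : u ∈ M.verts ∧ ∃ w, G.Adj x w ∧ M.Adj w u)
    (hv : v ∈ M.verts ∧ ∃ w, G.Adj y w ∧ M.Adj w v) :
    ¬ G.Adj u v := by
  rintro huv
  obtain ⟨huM, w1, hxw1, hw1u⟩ := hu
  obtain ⟨hvM, w2, hyw2, hw2v⟩ := hv
  have hw1M : w1 ∈ M.verts := M.edge_vert hw1u
  have hw2M : w2 ∈ M.verts := M.edge_vert hw2v
  have hxu : x ≠ u := fun h => hx (h ▸ huM)
  have hxv : x ≠ v := fun h => hx (h ▸ hvM)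
  have hxw1' : x ≠ w1 := fun h => hx (h ▸ hw1M)
  have hxw2 : x ≠ w2 := fun h => hx (h ▸ hw2M)
  have hyu : y ≠ u := fun h => hy (h ▸ huM)
  have hyv : y ≠ v := fun h => hy (h ▸ hvM)
  have hyw1 : y ≠ w1 := fun h => hy (h ▸ hw1M)
  have hyw2' : y ≠ w2 := fun h => hy (h ▸ hw2M)
  have huvne : u ≠ v := huv.ne
  by_cases hce : w1 = v
  · -- Case A : the edge uv is itself in M
    have hvu : M.Adj v u := hce ▸ hw1u
    have hxv' : G.Adj x v := hce ▸ hxw1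
    have hw2u : w2 = u := aux_partner_eq hM hw2v.symm hvu
    have hyu' : G.Adj y u := hw2u ▸ hyw2
    have hcl : ∀ a b, a ∈ ({v, u} : Set V) → M.Adj a b → b ∈ ({v, u} : Set V) := by
      intro a b ha hab
      simp only [Set.mem_insert_iff, Set.mem_singleton_iff] at ha ⊢
      rcases ha with rfl | rfl
      · exact Or.inr (aux_partner_eq hM hab hvu)
      · exact Or.inl (aux_partner_eq hM hab hvu.symm)
    have hdel := aux_del_matching hM hcl
    set Md := M.deleteVerts ({v, u} : Set V) with hMd
    have hdelE : Md.edgeSet = M.edgeSet \ {s(v, u)} := aux_del_edge hM hvu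
    have m2 : (G.subgraphOfAdj hxv').IsMatching :=
      SimpleGraph.Subgraph.IsMatching.subgraphOfAdj hxv'
    have m3 : (G.subgraphOfAdj hyu').IsMatching :=
      SimpleGraph.Subgraph.IsMatching.subgraphOfAdj hyu'
    have hscl : Md.support = M.verts \ {v, u} := by
      rw [hdel.support_eq_verts, hMd, SimpleGraph.Subgraph.deleteVerts_verts]
    have mN1 : ((G.subgraphOfAdj hyu') ⊔ Md).IsMatching := by
      apply m3.sup hdel
      rw [SimpleGraph.support_subgraphOfAdj, hscl, Set.disjoint_left]
      intro a ha
      simp only [Set.mem_insert_iff, Set.mem_singleton_iff] at ha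
      rcases ha with rfl | rfl
      · exact fun h => hy h.1
      · exact fun h => h.2 (Or.inr rfl)
    have mN2 : ((G.subgraphOfAdj hxv') ⊔ ((G.subgraphOfAdj hyu') ⊔ Md)).IsMatching := by
      apply m2.sup mN1
      rw [SimpleGraph.support_subgraphOfAdj, mN1.support_eq_verts,
        SimpleGraph.Subgraph.verts_sup, SimpleGraph.subgraphOfAdj_verts, hMd,
        SimpleGraph.Subgraph.deleteVerts_verts, Set.disjoint_left]
      intro a ha
      simp only [Set.mem_insert_iff, Set.mem_singleton_iff, Set.mem_union, Set.mem_diff]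
      push_neg
      simp only [Set.mem_insert_iff, Set.mem_singleton_iff] at ha
      rcases ha with rfl | rfl
      · exact ⟨⟨hxy, hxu⟩, fun h => absurd h hx⟩
      · exact ⟨⟨Ne.symm hyv, Ne.symm huvne⟩, fun _ => Or.inl rfl⟩
    have hE : ((G.subgraphOfAdj hxv') ⊔ ((G.subgraphOfAdj hyu') ⊔ Md)).edgeSet
        = insert s(x, v) (insert s(y, u) (M.edgeSet \ {s(v, u)})) := by
      rw [SimpleGraph.Subgraph.edgeSet_sup, SimpleGraph.Subgraph.edgeSet_sup,
        SimpleGraph.edgeSet_subgraphOfAdj, SimpleGraph.edgeSet_subgraphOfAdj, hdelE,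
        Set.singleton_union, Set.singleton_union]
    have h1 : s(y, u) ∉ M.edgeSet \ {s(v, u)} := fun h => hy (M.edge_vert h.1)
    have h2 : s(x, v) ∉ insert s(y, u) (M.edgeSet \ {s(v, u)}) := by
      intro h
      simp only [Set.mem_insert_iff] at h
      rcases h with h | h
      · rw [Sym2.eq_iff] at h
        rcases h with ⟨h, _⟩ | ⟨h, _⟩
        · exact hxy h
        · exact hxu h
      · exact hx (M.edge_vert h.1)
    have hc1 := Set.ncard_diff_singleton_add_one (show s(v,u) ∈ M.edgeSet from hvu)
      (M.edgeSet.toFinite)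
    have hle := hmax _ mN2
    rw [hE, Set.ncard_insert_of_notMem h2, Set.ncard_insert_of_notMem h1] at hle
    omega
  · -- Case B : two distinct matched edges w1u, w2v
    have hnadj : ¬ M.Adj u v := fun h => hce (aux_partner_eq hM hw1u.symm h)
    have hw2u : w2 ≠ u := fun h => hnadj (by rw [← h]; exact hw2v)
    have hw1w2 : w1 ≠ w2 := fun h => huvne (aux_partner_eq hM hw1u (by rw [h]; exact hw2v))
    have hw1une : w1 ≠ u := hw1u.ne
    have hw2vne : w2 ≠ v := hw2v.ne
    have hcl : ∀ a b, a ∈ ({w1, u, w2, v} : Set V) → M.Adj a b →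
        b ∈ ({w1, u, w2, v} : Set V) := by
      intro a b ha hab
      simp only [Set.mem_insert_iff, Set.mem_singleton_iff] at ha ⊢
      rcases ha with rfl | rfl | rfl | rfl
      · exact Or.inr (Or.inl (aux_partner_eq hM hab hw1u))
      · exact Or.inl (aux_partner_eq hM hab hw1u.symm)
      · exact Or.inr (Or.inr (Or.inr (aux_partner_eq hM hab hw2v)))
      · exact Or.inr (Or.inr (Or.inl (aux_partner_eq hM hab hw2v.symm)))
    have hdel := aux_del_matching hM hcl
    set Md := M.deleteVerts ({w1, u, w2, v} : Set V) with hMd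
    -- compute the edge set of Md
    have hcl1 : ∀ a b, a ∈ ({w1, u} : Set V) → M.Adj a b → b ∈ ({w1, u} : Set V) := by
      intro a b ha hab
      simp only [Set.mem_insert_iff, Set.mem_singleton_iff] at ha ⊢
      rcases ha with rfl | rfl
      · exact Or.inr (aux_partner_eq hM hab hw1u)
      · exact Or.inl (aux_partner_eq hM hab hw1u.symm)
    have hM1 := aux_del_matching hM hcl1
    have hadj1 : (M.deleteVerts {w1, u}).Adj w2 v := by
      rw [SimpleGraph.Subgraph.deleteVerts_adj]
      refine ⟨hw2M, ?_, hvM, ?_, hw2v⟩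
      · simp only [Set.mem_insert_iff, Set.mem_singleton_iff]
        rintro (rfl | rfl)
        · exact hw1w2 rfl
        · exact hw2u rfl
      · simp only [Set.mem_insert_iff, Set.mem_singleton_iff]
        rintro (rfl | rfl)
        · exact hce rfl
        · exact huvne rfl
    have hsets : ({w1, u} : Set V) ∪ {w2, v} = {w1, u, w2, v} := by
      ext a
      simp only [Set.mem_union, Set.mem_insert_iff, Set.mem_singleton_iff]
      tauto
    have hMdE : Md.edgeSet = (M.edgeSet \ {s(w1, u)}) \ {s(w2, v)} := by
      rw [hMd, ← hsets, ← SimpleGraph.Subgraph.deleteVerts_deleteVerts,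
        aux_del_edge hM1 hadj1, aux_del_edge hM hw1u]
    have m1 : (G.subgraphOfAdj huv).IsMatching :=
      SimpleGraph.Subgraph.IsMatching.subgraphOfAdj huv
    have m2 : (G.subgraphOfAdj hxw1).IsMatching :=
      SimpleGraph.Subgraph.IsMatching.subgraphOfAdj hxw1
    have m3 : (G.subgraphOfAdj hyw2).IsMatching :=
      SimpleGraph.Subgraph.IsMatching.subgraphOfAdj hyw2
    have hscl : Md.support = M.verts \ {w1, u, w2, v} := by
      rw [hdel.support_eq_verts, hMd, SimpleGraph.Subgraph.deleteVerts_verts]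
    have mN1 : ((G.subgraphOfAdj huv) ⊔ Md).IsMatching := by
      apply m1.sup hdel
      rw [SimpleGraph.support_subgraphOfAdj, hscl, Set.disjoint_left]
      intro a ha
      simp only [Set.mem_insert_iff, Set.mem_singleton_iff] at ha
      rcases ha with rfl | rfl
      · exact fun h => h.2 (Or.inr (Or.inl rfl))
      · exact fun h => h.2 (Or.inr (Or.inr (Or.inr rfl)))
    have mN2 : ((G.subgraphOfAdj hyw2) ⊔ ((G.subgraphOfAdj huv) ⊔ Md)).IsMatching := by
      apply m3.sup mN1
      rw [SimpleGraph.support_subgraphOfAdj, mN1.support_eq_verts,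
        SimpleGraph.Subgraph.verts_sup, SimpleGraph.subgraphOfAdj_verts, hMd,
        SimpleGraph.Subgraph.deleteVerts_verts, Set.disjoint_left]
      intro a ha
      simp only [Set.mem_insert_iff, Set.mem_singleton_iff, Set.mem_union, Set.mem_diff]
      push_neg
      simp only [Set.mem_insert_iff, Set.mem_singleton_iff] at ha
      rcases ha with rfl | rfl
      · exact ⟨⟨hyu, hyv⟩, fun h => absurd h hy⟩
      · exact ⟨⟨fun h => hw2u h, fun h => hw2vne h⟩, fun _ => Or.inr (Or.inr (Or.inl rfl))⟩
    have mN3 : ((G.subgraphOfAdj hxw1) ⊔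
        ((G.subgraphOfAdj hyw2) ⊔ ((G.subgraphOfAdj huv) ⊔ Md))).IsMatching := by
      apply m2.sup mN2
      rw [SimpleGraph.support_subgraphOfAdj, mN2.support_eq_verts,
        SimpleGraph.Subgraph.verts_sup, SimpleGraph.Subgraph.verts_sup,
        SimpleGraph.subgraphOfAdj_verts, SimpleGraph.subgraphOfAdj_verts, hMd,
        SimpleGraph.Subgraph.deleteVerts_verts, Set.disjoint_left]
      intro a ha
      simp only [Set.mem_insert_iff, Set.mem_singleton_iff, Set.mem_union, Set.mem_diff]
      push_neg
      simp only [Set.mem_insert_iff, Set.mem_singleton_iff] at ha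
      rcases ha with rfl | rfl
      · exact ⟨⟨hxy, hxw2⟩, ⟨hxu, hxv⟩, fun h => absurd h hx⟩
      · exact ⟨⟨Ne.symm hyw1, hw1w2⟩, ⟨hw1une, hce⟩, fun _ => Or.inl rfl⟩
    have hE : ((G.subgraphOfAdj hxw1) ⊔
        ((G.subgraphOfAdj hyw2) ⊔ ((G.subgraphOfAdj huv) ⊔ Md))).edgeSet
        = insert s(x, w1) (insert s(y, w2)
            (insert s(u, v) ((M.edgeSet \ {s(w1, u)}) \ {s(w2, v)}))) := by
      rw [SimpleGraph.Subgraph.edgeSet_sup, SimpleGraph.Subgraph.edgeSet_sup,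
        SimpleGraph.Subgraph.edgeSet_sup, SimpleGraph.edgeSet_subgraphOfAdj,
        SimpleGraph.edgeSet_subgraphOfAdj, SimpleGraph.edgeSet_subgraphOfAdj, hMdE,
        Set.singleton_union, Set.singleton_union, Set.singleton_union]
    have h0 : s(u, v) ∉ (M.edgeSet \ {s(w1, u)}) \ {s(w2, v)} := fun h => hnadj h.1.1
    have h1 : s(y, w2) ∉ insert s(u, v) ((M.edgeSet \ {s(w1, u)}) \ {s(w2, v)}) := by
      intro h
      simp only [Set.mem_insert_iff] at h
      rcases h with h | h
      · rw [Sym2.eq_iff] at h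
        rcases h with ⟨h, _⟩ | ⟨h, _⟩
        · exact hyu h
        · exact hyv h
      · exact hy (M.edge_vert h.1.1)
    have h2 : s(x, w1) ∉ insert s(y, w2)
        (insert s(u, v) ((M.edgeSet \ {s(w1, u)}) \ {s(w2, v)})) := by
      intro h
      simp only [Set.mem_insert_iff] at h
      rcases h with h | h | h
      · rw [Sym2.eq_iff] at h
        rcases h with ⟨h, _⟩ | ⟨h, _⟩
        · exact hxy h
        · exact hxw2 h
      · rw [Sym2.eq_iff] at h
        rcases h with ⟨h, _⟩ | ⟨h, _⟩
        · exact hxu h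
        · exact hxv h
      · exact hx (M.edge_vert h.1.1)
    have he1 : s(w1, u) ∈ M.edgeSet := hw1u
    have he2 : s(w2, v) ∈ M.edgeSet \ {s(w1, u)} := by
      refine ⟨hw2v, fun h => ?_⟩
      simp only [Set.mem_singleton_iff, Sym2.eq_iff] at h
      rcases h with ⟨h, _⟩ | ⟨h, _⟩
      · exact hw1w2 h.symm
      · exact hw2u h
    have hc1 := Set.ncard_diff_singleton_add_one he1 (M.edgeSet.toFinite)
    have hc2 := Set.ncard_diff_singleton_add_one he2 ((M.edgeSet \ {s(w1, u)}).toFinite)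
    have hle := hmax _ mN3
    rw [hE, Set.ncard_insert_of_notMem h2, Set.ncard_insert_of_notMem h1,
      Set.ncard_insert_of_notMem h0] at hle
    omega
end

section
/- Let d ≥ 1 and n ≥ 3d + 2 be integers. If G is an n-vertex graph with minimum degree δ(G) ≥ d and maximum degree Δ(G) ≤ n − 2d − 1, then G admits a matching of size d + 1. -/
/-!
Grow a matching one edge at a time. Let `M` have `k ≤ d` edges and let `U` be the set of
unmatched vertices, so `|U| = n - 2k ≥ n - 2d ≥ d + 2`. If `M` cannot be enlarged, then `U` is
independent, and no edge `xy` of `M` has distinct `u, w ∈ U` with `u ~ x`, `w ~ y` (otherwise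
replace `xy` by `ux` and `yw`). Writing `c(s)` for the number of neighbours of `s` in `U`, this
forces `c(x) + c(y) < |U|` for every edge `xy` of `M`: if `c(x) = 0`, then
`c(y) < deg y ≤ n - 2d - 1 < |U|`, and otherwise `x` and `y` see the same single vertex of `U`.
Counting the edges between `U` and `V(M)` gives
`d |U| ≤ ∑_{u ∈ U} deg u = ∑_{xy ∈ M} (c(x) + c(y)) ≤ k (|U| - 1) < d |U|`.
-/

open Finset

namespace SimpleGraph.Subgraph

variable {V : Type*} {G : SimpleGraph V} {M : G.Subgraph} {u v w x y : V}

lemma IsMatching.ncard_verts_eq_two_mul [Finite V] (hM : M.IsMatching) :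
    M.verts.ncard = 2 * M.edgeSet.ncard := by
  classical
  have := Fintype.ofFinite V
  have hedges : #M.coe.edgeFinset = M.edgeSet.ncard := by
    rw [← Set.ncard_coe_finset, coe_edgeFinset, ← image_coe_edgeSet_coe,
      Set.ncard_image_of_injective _ (Sym2.map.injective Subtype.coe_injective)]
  rw [← hedges, ← M.coe.sum_degrees_eq_twice_card_edges, ← Nat.card_coe_set_eq,
    Nat.card_eq_fintype_card, Fintype.card_eq_sum_ones]
  exact sum_congr rfl fun v _ => by
    rw [coe_degree, degree_eq_one_iff_existsUnique_adj.mpr (hM v.2)]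

lemma IsMatching.deleteVerts_of_adj (hM : M.IsMatching) (hxy : M.Adj x y) :
    (M.deleteVerts {x, y}).IsMatching := by
  intro v hv
  rw [deleteVerts_verts] at hv
  obtain ⟨w, hvw, hw⟩ := hM hv.1
  refine ⟨w, deleteVerts_adj.mpr ⟨hv.1, hv.2, hvw.snd_mem, ?_, hvw⟩,
    fun w' hw' => hw w' (deleteVerts_adj.mp hw').2.2.2.2⟩
  rintro (rfl | rfl)
  · exact hv.2 (.inr (hM.eq_of_adj_left hvw.symm hxy))
  · exact hv.2 (.inl (hM.eq_of_adj_right hvw hxy))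

lemma IsMatching.ncard_edgeSet_deleteVerts_of_adj [Finite V] (hM : M.IsMatching)
    (hxy : M.Adj x y) : (M.deleteVerts {x, y}).edgeSet.ncard + 1 = M.edgeSet.ncard := by
  have : M.edgeSet = insert s(x, y) (M.deleteVerts {x, y}).edgeSet := by
    ext ⟨a, b⟩
    change s(a, b) ∈ _ ↔ s(a, b) ∈ _
    simp only [Set.mem_insert_iff, Subgraph.mem_edgeSet, deleteVerts_adj, Sym2.eq_iff,
      Set.mem_singleton_iff]
    grind [hM.eq_of_adj_left, hM.eq_of_adj_right, Adj.symm, Adj.fst_mem, Adj.snd_mem]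
  rw [this, Set.ncard_insert_of_notMem]
  simp

lemma IsMatching.sup_subgraphOfAdj (hM : M.IsMatching) (huv : G.Adj u v) (hu : u ∉ M.verts)
    (hv : v ∉ M.verts) : (M ⊔ G.subgraphOfAdj huv).IsMatching := by
  refine hM.sup (.subgraphOfAdj huv) ?_
  rw [hM.support_eq_verts, support_subgraphOfAdj]
  simp [Set.disjoint_right, hu, hv]

lemma ncard_edgeSet_sup_subgraphOfAdj [Finite V] (huv : G.Adj u v) (hu : u ∉ M.verts) :
    (M ⊔ G.subgraphOfAdj huv).edgeSet.ncard = M.edgeSet.ncard + 1 := by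
  rw [edgeSet_sup, edgeSet_subgraphOfAdj, Set.union_singleton,
    Set.ncard_insert_of_notMem fun h => hu (M.mem_verts_of_mem_edge h (Sym2.mem_mk_left u v))]

lemma IsMatching.exists_ncard_edgeSet_eq_add_one_of_augmenting [Finite V] (hM : M.IsMatching)
    (hxy : M.Adj x y) (hux : G.Adj u x) (hyw : G.Adj y w) (hu : u ∉ M.verts) (hw : w ∉ M.verts)
    (huw : u ≠ w) : ∃ M' : G.Subgraph, M'.IsMatching ∧ M'.edgeSet.ncard = M.edgeSet.ncard + 1 := by
  set M₀ := M.deleteVerts {x, y}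
  have hu₀ : u ∉ M₀.verts := fun h => hu h.1
  have hx₀ : x ∉ M₀.verts := fun h => h.2 (.inl rfl)
  set M₁ := M₀ ⊔ G.subgraphOfAdj hux
  have hy₁ : y ∉ M₁.verts := by
    simp only [M₁, M₀, verts_sup, subgraphOfAdj_verts, deleteVerts_verts]
    grind [hxy.ne, hxy.snd_mem]
  have hw₁ : w ∉ M₁.verts := by
    simp only [M₁, M₀, verts_sup, subgraphOfAdj_verts, deleteVerts_verts]
    grind [hxy.fst_mem]
  refine ⟨M₁ ⊔ G.subgraphOfAdj hyw,
    ((hM.deleteVerts_of_adj hxy).sup_subgraphOfAdj hux hu₀ hx₀).sup_subgraphOfAdj hyw hy₁ hw₁, ?_⟩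
  rw [ncard_edgeSet_sup_subgraphOfAdj hyw hy₁, ncard_edgeSet_sup_subgraphOfAdj hux hu₀,
    ← hM.ncard_edgeSet_deleteVerts_of_adj hxy]

end SimpleGraph.Subgraph

namespace SimpleGraph

variable {V : Type*} [Fintype V] {G : SimpleGraph V} [DecidableRel G.Adj] {x y : V}

lemma card_filter_adj_lt_degree (U : Finset V) (hxy : G.Adj x y) (hx : x ∉ U) :
    #{u ∈ U | G.Adj y u} < G.degree y := by
  rw [← card_neighborFinset_eq_degree]
  refine card_lt_card ((ssubset_iff_of_subset fun u hu => ?_).mpr ⟨x, ?_, fun h => ?_⟩)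
  · exact (mem_neighborFinset _ _ _).mpr (mem_filter.mp hu).2
  · exact (mem_neighborFinset _ _ _).mpr hxy.symm
  · exact hx (mem_filter.mp h).1

lemma card_filter_adj_add_card_filter_adj_lt (U : Finset V) (hxy : G.Adj x y) (hx : x ∉ U)
    (hy : y ∉ U) (hU : 3 ≤ #U) (hdx : G.degree x ≤ #U) (hdy : G.degree y ≤ #U)
    (hunique : ∀ u ∈ U, ∀ w ∈ U, G.Adj x u → G.Adj y w → u = w) :
    #{u ∈ U | G.Adj x u} + #{u ∈ U | G.Adj y u} < #U := by
  rcases eq_empty_or_nonempty {u ∈ U | G.Adj x u} with hx₀ | ⟨a, ha⟩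
  · rw [hx₀, card_empty, zero_add]
    exact (card_filter_adj_lt_degree U hxy hx).trans_le hdy
  rcases eq_empty_or_nonempty {u ∈ U | G.Adj y u} with hy₀ | ⟨b, hb⟩
  · rw [hy₀, card_empty, add_zero]
    exact (card_filter_adj_lt_degree U hxy.symm hy).trans_le hdx
  simp only [mem_filter] at ha hb
  have hxb : #{u ∈ U | G.Adj x u} ≤ 1 := card_le_one.mpr fun u hu u' hu' => by
    simp only [mem_filter] at hu hu'
    rw [hunique u hu.1 b hb.1 hu.2 hb.2, hunique u' hu'.1 b hb.1 hu'.2 hb.2]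
  have hya : #{u ∈ U | G.Adj y u} ≤ 1 := card_le_one.mpr fun w hw w' hw' => by
    simp only [mem_filter] at hw hw'
    rw [← hunique a ha.1 w hw.1 ha.2 hw.2, ← hunique a ha.1 w' hw'.1 ha.2 hw'.2]
  omega

variable [DecidableEq V]

lemma sum_degree_eq_sum_card_filter_adj (U : Finset V) (hU : ∀ u ∈ U, ∀ v ∈ U, ¬G.Adj u v) :
    ∑ u ∈ U, G.degree u = ∑ s ∈ Uᶜ, #{u ∈ U | G.Adj s u} := by
  calc ∑ u ∈ U, G.degree u = ∑ u ∈ U, #{s ∈ Uᶜ | G.Adj u s} := by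
        refine sum_congr rfl fun u hu => ?_
        rw [← card_neighborFinset_eq_degree, neighborFinset_eq_filter]
        congr 1
        ext s
        simp only [mem_filter, mem_univ, true_and, mem_compl, iff_and_self]
        exact fun hus hs => hU u hu s hs hus
    _ = ∑ s ∈ Uᶜ, #{u ∈ U | G.Adj u s} := sum_card_bipartiteAbove_eq_sum_card_bipartiteBelow _
    _ = ∑ s ∈ Uᶜ, #{u ∈ U | G.Adj s u} := by simp_rw [G.adj_comm]

namespace Subgraph

variable {M : G.Subgraph}

lemma IsMatching.two_mul_sum_degree_add_card_le (hM : M.IsMatching) (U : Finset V)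
    (hU : ∀ v, v ∈ U ↔ v ∉ M.verts) (hU₃ : 3 ≤ #U) (hdeg : ∀ v, G.degree v ≤ #U)
    (hindep : ∀ u ∈ U, ∀ v ∈ U, ¬G.Adj u v)
    (hunique : ∀ x y, M.Adj x y → ∀ u ∈ U, ∀ w ∈ U, G.Adj x u → G.Adj y w → u = w) :
    2 * ∑ u ∈ U, G.degree u + #Uᶜ ≤ #Uᶜ * #U := by
  set c : V → ℕ := fun s => #{u ∈ U | G.Adj s u}
  have hmem : ∀ s, s ∈ Uᶜ ↔ s ∈ M.verts := by simp [hU]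
  choose! p hp using fun s hs => (hM ((hmem s).mp hs)).exists
  have hpU : ∀ s ∈ Uᶜ, p s ∈ Uᶜ := fun s hs => (hmem _).mpr (hp s hs).snd_mem
  have hpp : ∀ s ∈ Uᶜ, p (p s) = s := fun s hs =>
    hM.eq_of_adj_left (hp _ (hpU s hs)) (hp s hs).symm
  have hsum_p : ∑ s ∈ Uᶜ, c (p s) = ∑ s ∈ Uᶜ, c s :=
    sum_nbij' p p hpU hpU hpp hpp fun _ _ => rfl
  have hpair : ∀ s ∈ Uᶜ, c s + c (p s) + 1 ≤ #U := fun s hs =>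
    card_filter_adj_add_card_filter_adj_lt U (hp s hs).adj_sub (mem_compl.mp hs)
      (mem_compl.mp (hpU s hs)) hU₃ (hdeg _) (hdeg _) (hunique s (p s) (hp s hs))
  calc 2 * ∑ u ∈ U, G.degree u + #Uᶜ = ∑ s ∈ Uᶜ, (c s + c (p s) + 1) := by
        rw [sum_degree_eq_sum_card_filter_adj U hindep, sum_add_distrib, sum_add_distrib, hsum_p,
          card_eq_sum_ones]
        ring
    _ ≤ ∑ _s ∈ Uᶜ, #U := sum_le_sum hpair
    _ = #Uᶜ * #U := by rw [sum_const, smul_eq_mul]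

lemma IsMatching.exists_ncard_edgeSet_eq_add_one {d : ℕ} (hd : 1 ≤ d)
    (hn : 3 * d + 2 ≤ Fintype.card V) (hmin : ∀ v, d ≤ G.degree v)
    (hmax : ∀ v, G.degree v + 2 * d + 1 ≤ Fintype.card V) (hM : M.IsMatching)
    (hk : M.edgeSet.ncard ≤ d) :
    ∃ M' : G.Subgraph, M'.IsMatching ∧ M'.edgeSet.ncard = M.edgeSet.ncard + 1 := by
  classical
  by_contra! hno
  set U : Finset V := {v | v ∉ M.verts}
  have hU : ∀ v, v ∈ U ↔ v ∉ M.verts := by simp [U]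
  have hcardUc : #Uᶜ = 2 * M.edgeSet.ncard := by
    rw [← Set.ncard_coe_finset, ← hM.ncard_verts_eq_two_mul]
    congr
    ext v
    simp [hU]
  have hcard : #U + #Uᶜ = Fintype.card V := card_add_card_compl U
  have hindep : ∀ u ∈ U, ∀ v ∈ U, ¬G.Adj u v := fun u hu v hv huv =>
    hno _ (hM.sup_subgraphOfAdj huv ((hU u).mp hu) ((hU v).mp hv))
      (ncard_edgeSet_sup_subgraphOfAdj huv ((hU u).mp hu))
  have hunique : ∀ x y, M.Adj x y → ∀ u ∈ U, ∀ w ∈ U, G.Adj x u → G.Adj y w → u = w := by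
    intro x y hxy u hu w hw hxu hyw
    by_contra huw
    obtain ⟨M', hM', hcard'⟩ := hM.exists_ncard_edgeSet_eq_add_one_of_augmenting hxy hxu.symm hyw
      ((hU u).mp hu) ((hU w).mp hw) huw
    exact hno M' hM' hcard'
  have hupper := hM.two_mul_sum_degree_add_card_le U hU (by omega)
    (fun v => by have := hmax v; omega) hindep hunique
  have hlower : #U * d ≤ ∑ u ∈ U, G.degree u := by
    simpa using card_nsmul_le_sum U _ d fun u _ => hmin u
  nlinarith

end Subgraph

theorem exists_isMatching_ncard_edgeSet_eq {d : ℕ} (hd : 1 ≤ d)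
    (hn : 3 * d + 2 ≤ Fintype.card V) (hmin : ∀ v, d ≤ G.degree v)
    (hmax : ∀ v, G.degree v + 2 * d + 1 ≤ Fintype.card V) {k : ℕ} (hk : k ≤ d + 1) :
    ∃ M : G.Subgraph, M.IsMatching ∧ M.edgeSet.ncard = k := by
  induction k with
  | zero => exact ⟨⊥, fun _ h => h.elim, by simp⟩
  | succ k ih =>
    obtain ⟨M, hM, rfl⟩ := ih (by omega)
    exact hM.exists_ncard_edgeSet_eq_add_one hd hn hmin hmax (by omega)

end SimpleGraph

/-- Let `d ≥ 1` and `n ≥ 3d + 2`. If `G` is an `n`-vertex graph with minimum degree at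
least `d` and maximum degree at most `n - 2d - 1`, then `G` admits a matching of size
`d + 1`. -/
theorem statement9 (d n : ℕ) (hd : 1 ≤ d) (hn : 3 * d + 2 ≤ n)
    (G : SimpleGraph (Fin n)) [DecidableRel G.Adj]
    (hmin : ∀ v, d ≤ G.degree v)
    (hmax : ∀ v, G.degree v + 2 * d + 1 ≤ n) :
    ∃ M : G.Subgraph, M.IsMatching ∧ M.edgeSet.ncard = d + 1 :=
  G.exists_isMatching_ncard_edgeSet_eq hd (by simpa using hn) hmin (by simpa using hmax) le_rfl
end

section
/- There exists γ0 > 0 such that for every γ ∈ (0, γ0] there exists n0 ∈ ℕ with the following property for every even integer n ≥ n0. If G is an n-vertex graph with σ(G) ≥ n − γn, then one of the following holds: (i) G admits a perfect matching; (ii) G contains a 2γ-independent set of size at least n/2; (iii) G has exactly two connected components C_1 and C_2, both of odd order, and moreover for each i ∈ {1,2}, if |C_i| ≤ (1−γ)n/2 then C_i induces a clique. -/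
open Finset

namespace SimpleGraph

variable {V : Type*}

section Matching

variable {G : SimpleGraph V} {φ : V → V}

theorem exists_isPerfectMatching_of_involutive (hφ : Function.Involutive φ)
    (hadj : ∀ v, G.Adj v (φ v)) : ∃ M : G.Subgraph, M.IsPerfectMatching := by
  refine ⟨⟨Set.univ, fun v w => φ v = w, ?_, fun _ => trivial, ?_⟩, ?_⟩
  · rintro v _ rfl
    exact hadj v
  · exact ⟨fun v _ h => h ▸ hφ v⟩
  · exact Subgraph.isPerfectMatching_iff.mpr fun v => ⟨φ v, rfl, fun _ h => Eq.symm h⟩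

theorem Subgraph.IsPerfectMatching.exists_involutive {M : G.Subgraph} (hM : M.IsPerfectMatching) :
    ∃ φ : V → V, Function.Involutive φ ∧ ∀ v, G.Adj v (φ v) := by
  choose φ hφ hφ_unique using Subgraph.isPerfectMatching_iff.mp hM
  exact ⟨φ, fun v => (hφ_unique _ v (hφ v).symm).symm, fun v => M.adj_sub (hφ v)⟩

/-- A perfect matching of `G ⊔ edge x y` that contains the edge `xy`, given by the map `φ`
sending each vertex to its partner. -/
structure IsMatchingExcept (G : SimpleGraph V) (φ : V → V) (x y : V) : Prop where
  involutive : Function.Involutive φ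
  ne : x ≠ y
  apply_left : φ x = y
  adj : ∀ v, v ≠ x → v ≠ y → G.Adj v (φ v)

namespace IsMatchingExcept

variable {x y v w r : V} (h : G.IsMatchingExcept φ x y)
include h

theorem apply_right : φ y = x := by
  rw [← h.apply_left, h.involutive]

theorem symm : G.IsMatchingExcept φ y x :=
  ⟨h.involutive, h.ne.symm, h.apply_right, fun v hy hx => h.adj v hx hy⟩

theorem exists_isPerfectMatching (hxy : G.Adj x y) : ∃ M : G.Subgraph, M.IsPerfectMatching := by
  refine exists_isPerfectMatching_of_involutive h.involutive fun v => ?_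
  by_cases hx : v = x
  · rw [hx, h.apply_left]; exact hxy
  by_cases hy : v = y
  · rw [hy, h.apply_right]; exact hxy.symm
  exact h.adj v hx hy

theorem not_adj (hfree : G.IsMatchingFree) : ¬G.Adj x y := fun hxy =>
  let ⟨M, hM⟩ := h.exists_isPerfectMatching hxy
  hfree M hM

theorem apply_ne_self (hx : v ≠ x) (hy : v ≠ y) : φ v ≠ v :=
  (h.adj v hx hy).ne.symm

theorem apply_ne_left (hy : v ≠ y) : φ v ≠ x := fun hv => hy <| by
  rw [← h.apply_left, ← hv, h.involutive]

/-- Re-pairing along the alternating path `y, x, w, φ w`: `x` is now matched to `w`, and `y`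
to `φ w`. -/
theorem conj_swap [DecidableEq V] (hxw : G.Adj x w) (hwy : w ≠ y) :
    G.IsMatchingExcept (fun v => Equiv.swap y w (φ (Equiv.swap y w v))) y (φ w) := by
  have hwx : w ≠ x := hxw.ne.symm
  have hφw_y : φ w ≠ y := h.symm.apply_ne_left hwx
  have hφw_w : φ w ≠ w := h.apply_ne_self hwx hwy
  refine ⟨fun v => by simp [h.involutive _], hφw_y.symm, ?_, fun v hvy hvφw => ?_⟩
  · simp [Equiv.swap_apply_of_ne_of_ne hφw_y hφw_w]
  by_cases hvw : v = w
  · subst hvw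
    simp [h.apply_right, Equiv.swap_apply_of_ne_of_ne h.ne hxw.ne, hxw.symm]
  rw [Equiv.swap_apply_of_ne_of_ne hvy hvw]
  by_cases hvx : v = x
  · subst hvx
    simpa [h.apply_left] using hxw
  have hφv_w : φ v ≠ w := fun hv => hvφw (by rw [← hv, h.involutive])
  rw [Equiv.swap_apply_of_ne_of_ne (h.symm.apply_ne_left hvx) hφv_w]
  exact h.adj v hvx hvy

/-- No augmenting path `y, x, w, φ w`. -/
theorem not_adj_apply [DecidableEq V] (hfree : G.IsMatchingFree) (hxw : G.Adj x w) :
    ¬G.Adj y (φ w) := fun hyw => by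
  have hwy : w ≠ y := by rintro rfl; exact h.not_adj hfree hxw
  exact (h.conj_swap hxw hwy).not_adj hfree hyw

/-- No augmenting path `y, x, w, φ w, r, φ r`. -/
theorem not_adj_apply_of_adj_apply [DecidableEq V] (hfree : G.IsMatchingFree) (hxw : G.Adj x w)
    (hwr : G.Adj (φ w) r) : ¬G.Adj y (φ r) := fun hyr => by
  have hwy : w ≠ y := by rintro rfl; exact h.not_adj hfree hxw
  have hrw : r ≠ w := by rintro rfl; exact h.not_adj_apply hfree hxw hyr
  have hry : r ≠ y := by rintro rfl; exact h.not_adj hfree (h.apply_right ▸ hyr).symm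
  have hrx : r ≠ x := by rintro rfl; exact G.irrefl (h.apply_left ▸ hyr)
  have hφr_w : φ r ≠ w := fun hr => G.irrefl (by rwa [← hr, h.involutive] at hwr)
  have h' := (h.conj_swap hxw hwy).symm.conj_swap hwr hry
  refine h'.not_adj hfree ?_
  rwa [Equiv.swap_apply_of_ne_of_ne hry hrw,
    Equiv.swap_apply_of_ne_of_ne (h.symm.apply_ne_left hrx) hφr_w]

theorem isIndepSet [DecidableEq V] (hfree : G.IsMatchingFree) (S : Finset V)
    (hS : ∀ p ∈ S, G.Adj x p ∧ G.Adj y p) :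
    G.IsIndepSet ↑(insert x (insert y (S.image φ))) := by
  have hx : ∀ p ∈ S, ¬G.Adj x (φ p) := fun p hp => h.symm.not_adj_apply hfree (hS p hp).2
  have hy : ∀ p ∈ S, ¬G.Adj y (φ p) := fun p hp => h.not_adj_apply hfree (hS p hp).1
  have hSS : ∀ p ∈ S, ∀ p' ∈ S, ¬G.Adj (φ p) (φ p') := fun p hp p' hp' hadj =>
    h.not_adj_apply_of_adj_apply hfree (hS p hp).1 hadj (by rw [h.involutive]; exact (hS p' hp').2)
  have hxy := h.not_adj hfree
  intro u hu v hv _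
  simp only [coe_insert, coe_image, Set.mem_insert_iff, Set.mem_image, mem_coe] at hu hv
  rcases hu with rfl | rfl | ⟨p, hp, rfl⟩ <;> rcases hv with rfl | rfl | ⟨p', hp', rfl⟩
  all_goals first
    | exact G.irrefl | exact hxy | exact fun e => hxy e.symm
    | exact hx _ ‹_› | exact hy _ ‹_› | exact fun e => hx _ ‹_› e.symm
    | exact fun e => hy _ ‹_› e.symm | exact hSS _ ‹_› _ ‹_›

end IsMatchingExcept

theorem IsMatchingFree.exists_isMatchingExcept {x y : V} (hfree : G.IsMatchingFree)
    (hmax : ∀ G', G < G' → ∃ M : G'.Subgraph, M.IsPerfectMatching) (hxy : x ≠ y)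
    (hnadj : ¬G.Adj x y) : ∃ φ, G.IsMatchingExcept φ x y := by
  obtain ⟨M, hM⟩ := hmax _ (G.lt_sup_edge x y hxy hnadj)
  obtain ⟨φ, hφ, hadj⟩ := hM.exists_involutive
  have hadj' : ∀ v, (v = x → φ v ≠ y) → (v = y → φ v ≠ x) → G.Adj v (φ v) := by
    intro v hx hy
    have := hadj v
    simp only [sup_adj, edge_adj] at this
    tauto
  refine ⟨φ, hφ, hxy, ?_, fun v hx hy => hadj' v (absurd · hx) (absurd · hy)⟩
  by_contra hφx
  obtain ⟨M', hM'⟩ := exists_isPerfectMatching_of_involutive hφ fun v => hadj' v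
    (fun hv => hv ▸ hφx) (fun hv hφy => hφx (by rw [← hφy, hv, hφ]))
  exact hfree M' hM'

end Matching

section Components

variable {G H : SimpleGraph V}

theorem exists_isPerfectMatching_of_isClique_compl [Finite V] {s : Set V} (hs : G.IsClique s)
    (hsc : G.IsClique sᶜ) (heven : Even s.ncard) (heven' : Even sᶜ.ncard) :
    ∃ M : G.Subgraph, M.IsPerfectMatching := by
  obtain ⟨M, hMverts, hM⟩ := (hs.even_iff_exists_isMatching s.toFinite).mp heven
  obtain ⟨M', hM'verts, hM'⟩ := (hsc.even_iff_exists_isMatching sᶜ.toFinite).mp heven'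
  refine ⟨M ⊔ M', hM.sup hM' ?_, ?_⟩
  · rw [hM.support_eq_verts, hM'.support_eq_verts, hMverts, hM'verts]
    exact disjoint_compl_right
  · rw [Subgraph.isSpanning_iff, Subgraph.verts_sup, hMverts, hM'verts, Set.union_compl_self]

theorem IsMatchingFree.exists_ne_not_adj [Finite V] (hfree : G.IsMatchingFree)
    (heven : Even (Nat.card V)) : ∃ x y, x ≠ y ∧ ¬G.Adj x y := by
  by_contra! hadj
  obtain ⟨M, hM⟩ := exists_isPerfectMatching_of_isClique_compl (s := Set.univ)
    (fun x _ y _ hxy => hadj x y hxy) (by simp) (by rwa [Set.ncard_univ]) (by simp)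
  exact hfree M hM

theorem isClique_supp_of_adj_trans
    (htrans : ∀ u v w, G.Adj u v → G.Adj v w → u ≠ w → G.Adj u w) (c : G.ConnectedComponent) :
    G.IsClique c.supp := by
  have key : ∀ {u v} (p : G.Walk u v), u ≠ v → G.Adj u v := by
    intro u v p
    induction p with
    | nil => exact fun h => (h rfl).elim
    | @cons u w v huw _ ih =>
      intro huv
      by_cases hwv : w = v
      · exact hwv ▸ huw
      · exact htrans u w v huw (ih hwv) huv
  intro u hu v hv huv
  exact key (c.reachable_of_mem_supp hu hv).some huv

theorem supp_connectedComponentMk_eq_of_le (hGH : G ≤ H)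
    (hG : ∀ a b c, G.Reachable a b ∨ G.Reachable a c ∨ G.Reachable b c) {u v : V}
    (huv : ¬H.Reachable u v) :
    (G.connectedComponentMk u).supp = (H.connectedComponentMk u).supp := by
  ext w
  simp only [ConnectedComponent.mem_supp_iff, ConnectedComponent.eq]
  refine ⟨(·.mono hGH), fun hwu => ?_⟩
  rcases hG w u v with h | h | h
  · exact h
  · exact absurd (hwu.symm.trans (h.mono hGH)) huv
  · exact absurd (h.mono hGH) huv

theorem exists_two_components_of_le (hGH : G ≤ H)
    (hG : ∀ a b c, G.Reachable a b ∨ G.Reachable a c ∨ G.Reachable b c) {a b : V}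
    (hab : ¬H.Reachable a b) (ha : Odd (H.connectedComponentMk a).supp.ncard)
    (hb : Odd (H.connectedComponentMk b).supp.ncard) :
    ∃ c₁ c₂ : G.ConnectedComponent, c₁ ≠ c₂ ∧ (∀ c, c = c₁ ∨ c = c₂) ∧
      Odd c₁.supp.ncard ∧ Odd c₂.supp.ncard := by
  refine ⟨G.connectedComponentMk a, G.connectedComponentMk b,
    fun e => hab ((ConnectedComponent.eq.mp e).mono hGH), fun c => ?_, ?_, ?_⟩
  · induction c using ConnectedComponent.ind with | h v => ?_
    rcases hG v a b with h | h | h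
    · exact Or.inl (ConnectedComponent.sound h)
    · exact Or.inr (ConnectedComponent.sound h)
    · exact absurd (h.mono hGH) hab
  · rwa [supp_connectedComponentMk_eq_of_le hGH hG hab]
  · rwa [supp_connectedComponentMk_eq_of_le hGH hG (hab ·.symm)]

end Components

section Degree

variable [Fintype V] {G H : SimpleGraph V} [DecidableRel G.Adj]

theorem degree_lt_ncard_supp {v : V} {c : G.ConnectedComponent} (hv : v ∈ c.supp) :
    G.degree v < c.supp.ncard := by
  classical
  have hsub : ((insert v (G.neighborFinset v) : Finset V) : Set V) ⊆ c.supp := by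
    intro w hw
    obtain rfl | hw := mem_insert.mp hw
    · exact hv
    · exact c.mem_supp_of_adj_mem_supp hv ((G.mem_neighborFinset _ _).mp hw)
  have := Set.ncard_le_ncard hsub
  rwa [Set.ncard_coe_finset, card_insert_of_notMem (by simp), card_neighborFinset_eq_degree,
    Nat.add_one_le_iff] at this

/-- The Ore-type condition `σ(G) ≥ s`. -/
def OreCondition (G : SimpleGraph V) [DecidableRel G.Adj] (s : ℝ) : Prop :=
  ∀ x y, x ≠ y → ¬G.Adj x y → s ≤ (G.degree x : ℝ) + G.degree y

theorem OreCondition.mono [DecidableRel H.Adj] {s : ℝ} (hG : G.OreCondition s) (hGH : G ≤ H) :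
    H.OreCondition s := fun x y hxy hnadj => by
  have := hG x y hxy fun h => hnadj (hGH h)
  have : (G.degree x : ℝ) ≤ H.degree x := by exact_mod_cast degree_le_of_le hGH
  have : (G.degree y : ℝ) ≤ H.degree y := by exact_mod_cast degree_le_of_le hGH
  linarith

theorem OreCondition.isClique_supp {s : ℝ} (hG : G.OreCondition s) (c : G.ConnectedComponent)
    (hc : 2 * (c.supp.ncard : ℝ) < s + 2) : G.IsClique c.supp := by
  intro u hu v hv huv
  by_contra hnadj
  have := hG u v huv hnadj
  have : (G.degree u : ℝ) + 1 ≤ c.supp.ncard := by exact_mod_cast degree_lt_ncard_supp hu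
  have : (G.degree v : ℝ) + 1 ≤ c.supp.ncard := by exact_mod_cast degree_lt_ncard_supp hv
  linarith

/-- Vertices in three different components would have neighbourhoods too small for `σ(G)`. -/
theorem OreCondition.reachable_or_reachable_or_reachable {γ : ℝ}
    (hG : G.OreCondition (Fintype.card V - γ * Fintype.card V)) (hγ : γ ≤ 1 / 3) (a b c : V) :
    G.Reachable a b ∨ G.Reachable a c ∨ G.Reachable b c := by
  by_contra! ⟨hab, hac, hbc⟩
  have hdisj : ∀ {u v}, ¬G.Reachable u v →
      Disjoint (G.connectedComponentMk u).supp (G.connectedComponentMk v).supp :=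
    fun h => G.pairwise_disjoint_supp_connectedComponent (mt ConnectedComponent.eq.mp h)
  have hcard := Set.ncard_le_card ((G.connectedComponentMk a).supp ∪
    (G.connectedComponentMk b).supp ∪ (G.connectedComponentMk c).supp)
  rw [Set.ncard_union_eq (Disjoint.union_left (hdisj hac) (hdisj hbc)),
    Set.ncard_union_eq (hdisj hab), Nat.card_eq_fintype_card] at hcard
  have ha := degree_lt_ncard_supp (c := G.connectedComponentMk a) rfl
  have hb := degree_lt_ncard_supp (c := G.connectedComponentMk b) rfl
  have hc := degree_lt_ncard_supp (c := G.connectedComponentMk c) rfl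
  have hsum : (G.degree a + G.degree b + G.degree c + 3 : ℝ) ≤ Fintype.card V := by
    exact_mod_cast (by omega : G.degree a + G.degree b + G.degree c + 3 ≤ Fintype.card V)
  have hne : ∀ {u v}, ¬G.Reachable u v → u ≠ v := fun h e => h (e ▸ Reachable.refl _)
  have hnadj : ∀ {u v}, ¬G.Reachable u v → ¬G.Adj u v := fun h e => h e.reachable
  have := hG a b (hne hab) (hnadj hab)
  have := hG a c (hne hac) (hnadj hac)
  have := hG b c (hne hbc) (hnadj hbc)
  have : γ * Fintype.card V ≤ Fintype.card V / 3 := by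
    have : (0 : ℝ) ≤ Fintype.card V := Nat.cast_nonneg _
    nlinarith
  linarith

theorem IsMatchingFree.exists_odd_components_of_adj_trans (hfree : G.IsMatchingFree)
    (htrans : ∀ u v w, G.Adj u v → G.Adj v w → u ≠ w → G.Adj u w) {γ : ℝ}
    (hG : G.OreCondition (Fintype.card V - γ * Fintype.card V)) (hγ : γ ≤ 1 / 3)
    (heven : Even (Fintype.card V)) :
    ∃ a b, ¬G.Reachable a b ∧ Odd (G.connectedComponentMk a).supp.ncard ∧
      Odd (G.connectedComponentMk b).supp.ncard := by
  rw [← Nat.card_eq_fintype_card] at heven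
  obtain ⟨a, b, hab, hnadj⟩ := hfree.exists_ne_not_adj heven
  have hclique := isClique_supp_of_adj_trans htrans
  have hnreach : ¬G.Reachable a b := fun h =>
    hnadj (hclique _ rfl (ConnectedComponent.eq.mpr h.symm) hab)
  have hcompl : (G.connectedComponentMk a).suppᶜ = (G.connectedComponentMk b).supp := by
    ext v
    simp only [Set.mem_compl_iff, ConnectedComponent.mem_supp_iff, ConnectedComponent.eq]
    rcases hG.reachable_or_reachable_or_reachable hγ v a b with h | h | h
    · exact ⟨fun h' => (h' h).elim, fun h' => (hnreach (h.symm.trans h')).elim⟩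
    · exact ⟨fun _ => h, fun _ h' => hnreach (h'.symm.trans h)⟩
    · exact (hnreach h).elim
  have hcard := Set.ncard_add_ncard_compl (G.connectedComponentMk a).supp
  rw [hcompl] at hcard
  have hodd : Odd (G.connectedComponentMk a).supp.ncard := by
    by_contra hodd
    rw [Nat.not_odd_iff_even] at hodd
    have hodd' : Even (G.connectedComponentMk b).supp.ncard := by
      rw [← hcard, Nat.even_add] at heven
      exact heven.mp hodd
    obtain ⟨M, hM⟩ := exists_isPerfectMatching_of_isClique_compl (hclique _)
      (hcompl ▸ hclique _) hodd (hcompl ▸ hodd')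
    exact hfree M hM
  refine ⟨a, b, hnreach, hodd, ?_⟩
  rw [← hcard, Nat.even_add'] at heven
  exact heven.mp hodd

end Degree

section EdgesWithin

variable [Fintype V] [DecidableEq V] {G : SimpleGraph V} [DecidableRel G.Adj]

theorem edgesWithin_le_of_isIndepSet {A : Finset V} (hA : G.IsIndepSet A) (T : Finset V) :
    edgesWithin G T ≤ #(T \ A) * #T := by
  refine (card_le_card ?_).trans (card_biUnion_le_card_mul (T \ A)
    (fun u => T.image fun v => s(u, v)) _ fun _ _ => card_image_le)
  intro e he
  rw [mem_filter, mem_edgeFinset] at he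
  induction e with
  | _ u v =>
    obtain ⟨huv, he⟩ := he
    rw [mem_sym2_iff] at he
    have hu := he u (Sym2.mem_mk_left u v)
    have hv := he v (Sym2.mem_mk_right u v)
    simp only [mem_biUnion, mem_image, mem_sdiff]
    by_cases huA : u ∈ A
    · have hvA : v ∉ A := fun hvA => hA huA hvA huv.ne huv
      exact ⟨v, ⟨hv, hvA⟩, u, hu, Sym2.eq_swap⟩
    · exact ⟨u, ⟨hu, huA⟩, v, hv, rfl⟩

theorem edgesWithin_mono {H : SimpleGraph V} [DecidableRel H.Adj] (hGH : G ≤ H) (T : Finset V) :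
    edgesWithin G T ≤ edgesWithin H T :=
  card_le_card (filter_subset_filter _ (edgeFinset_mono hGH))

theorem exists_sparse_half_of_isIndepSet {A : Finset V} (hA : G.IsIndepSet A) {γ : ℝ}
    (hγ : 0 ≤ γ) (hAcard : (Fintype.card V : ℝ) + 1 - 3 * γ * Fintype.card V ≤ 2 * #A) :
    ∃ T : Finset V, (Fintype.card V : ℝ) / 2 ≤ #T ∧
      (edgesWithin G T : ℝ) ≤ 2 * γ * (Fintype.card V : ℝ) ^ 2 := by
  set n := Fintype.card V
  set k := (n + 1) / 2
  have hkn : (n : ℝ) ≤ 2 * k := by exact_mod_cast (by omega : n ≤ 2 * k)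
  have hkn' : 2 * (k : ℝ) ≤ n + 1 := by exact_mod_cast (by omega : 2 * k ≤ n + 1)
  by_cases hAk : k ≤ #A
  · refine ⟨A, by linarith [(Nat.cast_le (α := ℝ)).mpr hAk], ?_⟩
    have := edgesWithin_le_of_isIndepSet hA A
    rw [sdiff_self, bot_eq_empty, card_empty, zero_mul, Nat.le_zero] at this
    rw [this, Nat.cast_zero]
    positivity
  rw [not_le] at hAk
  obtain ⟨T, hAT, -, hT⟩ := exists_subsuperset_card_eq (subset_univ A) hAk.le
    (by rw [card_univ]; omega)
  refine ⟨T, by rw [hT]; linarith, ?_⟩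
  have hE := edgesWithin_le_of_isIndepSet hA T
  rw [card_sdiff_of_subset hAT, hT] at hE
  have hAk' : (#A : ℝ) < k := by exact_mod_cast hAk
  have hn : (1 : ℝ) ≤ n := by exact_mod_cast (by omega : 1 ≤ n)
  calc (edgesWithin G T : ℝ) ≤ (k - #A) * k := by
        rw [← Nat.cast_sub hAk.le, ← Nat.cast_mul]
        exact_mod_cast hE
    _ ≤ (3 * γ * n / 2) * ((n + 1) / 2) := by gcongr <;> linarith
    _ ≤ 2 * γ * n ^ 2 := by
      have : 0 ≤ γ * n * (5 * n - 3) := mul_nonneg (by positivity) (by linarith)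
      nlinarith

namespace IsMatchingExcept

variable {φ : V → V} {x y p : V} (h : G.IsMatchingExcept φ x y) (hfree : G.IsMatchingFree)
include h hfree

/-- Each pair `{v, φ v}` receives at most two edges from `x`, `y`, `φ p`, or three if it meets
the common neighbourhood of `x` and `y`; sum over all pairs. -/
theorem degree_add_degree_add_degree_le (hxp : G.Adj x p) (hyp : G.Adj y p) :
    G.degree x + G.degree y + G.degree (φ p) ≤
      Fintype.card V + #(G.neighborFinset x ∩ G.neighborFinset y) := by
  let w : V → ℕ := fun v =>
    (if G.Adj x v then 1 else 0) + (if G.Adj y v then 1 else 0) + (if G.Adj (φ p) v then 1 else 0)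
  let s : V → ℕ := fun v => if G.Adj x v ∧ G.Adj y v then 1 else 0
  have hpair : ∀ v, w v + w (φ v) ≤ 2 + s v + s (φ v) := fun v => by
    have h₁ := h.not_adj_apply hfree (w := v)
    have h₂ := h.symm.not_adj_apply hfree (w := v)
    have h₃ := h.not_adj_apply_of_adj_apply hfree hxp (r := v)
    have h₄ := h.symm.not_adj_apply_of_adj_apply hfree hyp (r := v)
    have h₅ := h.not_adj_apply_of_adj_apply hfree hxp (r := φ v)
    have h₆ := h.symm.not_adj_apply_of_adj_apply hfree hyp (r := φ v)
    rw [h.involutive v] at h₅ h₆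
    simp only [w, s]
    split_ifs <;> simp_all
  have hdeg : ∀ a, ∑ v, (if G.Adj a v then 1 else 0) = G.degree a := fun a => by
    simp [sum_boole, ← card_neighborFinset_eq_degree, neighborFinset_eq_filter]
  have hw : ∑ v, w v = G.degree x + G.degree y + G.degree (φ p) := by
    simp only [w, sum_add_distrib, hdeg]
  have hs : ∑ v, s v = #(G.neighborFinset x ∩ G.neighborFinset y) := by
    simp [s, sum_boole, neighborFinset_eq_filter, filter_and]
  have hcomp : ∀ f : V → ℕ, ∑ v, f (φ v) = ∑ v, f v :=
    Equiv.sum_comp (Function.Involutive.toPerm φ h.involutive)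
  have := sum_le_sum fun v (_ : v ∈ univ) => hpair v
  simp only [sum_add_distrib, hcomp, sum_const, card_univ, smul_eq_mul] at this
  omega

theorem exists_sparse_half {γ : ℝ} (hγ : 0 ≤ γ)
    (hG : G.OreCondition (Fintype.card V - γ * Fintype.card V)) (hxp : G.Adj x p)
    (hyp : G.Adj y p) : ∃ T : Finset V, (Fintype.card V : ℝ) / 2 ≤ #T ∧
      (edgesWithin G T : ℝ) ≤ 2 * γ * (Fintype.card V : ℝ) ^ 2 := by
  set S := G.neighborFinset x ∩ G.neighborFinset y
  have hS : ∀ p ∈ S, G.Adj x p ∧ G.Adj y p := by simp [S]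
  refine exists_sparse_half_of_isIndepSet (h.isIndepSet hfree S hS) hγ ?_
  have hcardA : #(insert x (insert y (S.image φ))) = #S + 2 := by
    rw [card_insert_of_notMem, card_insert_of_notMem,
      card_image_of_injective _ h.involutive.injective]
    · simpa using fun p hp => h.symm.apply_ne_left (hS p hp).1.ne.symm
    · simpa [h.ne] using fun p hp => h.apply_ne_left (hS p hp).2.ne.symm
  have hdeg : (G.degree x + G.degree y + G.degree (φ p) : ℝ) ≤ Fintype.card V + #S := by
    exact_mod_cast h.degree_add_degree_add_degree_le hfree hxp hyp
  have := hG x y h.ne (h.not_adj hfree)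
  have := hG x (φ p) (h.apply_ne_left hyp.ne.symm).symm (h.symm.not_adj_apply hfree hyp)
  have := hG y (φ p) (h.symm.apply_ne_left hxp.ne.symm).symm (h.not_adj_apply hfree hxp)
  rw [hcardA, Nat.cast_add, Nat.cast_ofNat]
  linarith

end IsMatchingExcept

end EdgesWithin

end SimpleGraph

/-- There exists `γ0 > 0` such that for every `γ ∈ (0, γ0]` there exists `n0` such that for
every even `n ≥ n0`: if `G` is an `n`-vertex graph with `σ(G) ≥ n - γn`, then (i) `G` has
a perfect matching, or (ii) `G` contains a `2γ`-independent set of size at least `n/2`, or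
(iii) `G` has exactly two connected components, both of odd order, and every component of
order at most `(1-γ)n/2` induces a clique. -/
theorem statement10 :
    ∃ γ0 : ℝ, 0 < γ0 ∧ ∀ γ : ℝ, 0 < γ → γ ≤ γ0 →
      ∃ n0 : ℕ, ∀ n : ℕ, n0 ≤ n → Even n →
        ∀ (G : SimpleGraph (Fin n)) [DecidableRel G.Adj],
          (∀ x y : Fin n, x ≠ y → ¬ G.Adj x y →
            (n : ℝ) - γ * (n : ℝ) ≤ (G.degree x : ℝ) + (G.degree y : ℝ)) →
          ((∃ M : G.Subgraph, M.IsPerfectMatching) ∨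
            (∃ T : Finset (Fin n), (n : ℝ) / 2 ≤ (T.card : ℝ) ∧
              (edgesWithin G T : ℝ) ≤ 2 * γ * (n : ℝ) ^ 2) ∨
            (∃ c₁ c₂ : G.ConnectedComponent, c₁ ≠ c₂ ∧
              (∀ c : G.ConnectedComponent, c = c₁ ∨ c = c₂) ∧
              Odd c₁.supp.ncard ∧ Odd c₂.supp.ncard ∧
              (∀ c : G.ConnectedComponent,
                (c.supp.ncard : ℝ) ≤ (1 - γ) / 2 * (n : ℝ) → G.IsClique c.supp))) := by
  refine ⟨1 / 3, by norm_num, fun γ hγ0 hγ => ⟨0, fun n _ heven G _ hσ => ?_⟩⟩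
  have hG : G.OreCondition (Fintype.card (Fin n) - γ * Fintype.card (Fin n)) := by
    rw [Fintype.card_fin]; exact hσ
  by_cases hPM : ∃ M : G.Subgraph, M.IsPerfectMatching
  · exact Or.inl hPM
  obtain ⟨H, hGH, hfree, hmax⟩ :=
    SimpleGraph.exists_maximal_isMatchingFree fun M hM => hPM ⟨M, hM⟩
  classical
  have hH := hG.mono hGH
  by_cases hP3 : ∃ x y p, H.Adj x p ∧ H.Adj p y ∧ x ≠ y ∧ ¬H.Adj x y
  · obtain ⟨x, y, p, hxp, hpy, hxy, hnadj⟩ := hP3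
    obtain ⟨φ, hφ⟩ := hfree.exists_isMatchingExcept hmax hxy hnadj
    obtain ⟨T, hT, hE⟩ := hφ.exists_sparse_half hfree hγ0.le hH hxp hpy.symm
    have := SimpleGraph.edgesWithin_mono hGH T
    rw [Fintype.card_fin] at hT hE
    exact Or.inr (Or.inl ⟨T, hT, le_trans (by exact_mod_cast this) hE⟩)
  push Not at hP3
  obtain ⟨a, b, hab, ha, hb⟩ := hfree.exists_odd_components_of_adj_trans
    (fun u v w huv hvw huw => hP3 u w v huv hvw huw) hH hγ (by rwa [Fintype.card_fin])
  obtain ⟨c₁, c₂, hne, hall, hodd₁, hodd₂⟩ :=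
    SimpleGraph.exists_two_components_of_le hGH (hG.reachable_or_reachable_or_reachable hγ) hab
      ha hb
  refine Or.inr (Or.inr ⟨c₁, c₂, hne, hall, hodd₁, hodd₂,
    fun c hc => hG.isClique_supp c ?_⟩)
  rw [Fintype.card_fin]
  linarith
end

section
/- Let r > t ≥ 1 be integers and let R be a graph containing two vertex-disjoint cliques K and L with |V(K)| = r and |V(L)| = t, such that at least r − t + 1 vertices of K are adjacent in R to every vertex of L. Let H be the subgraph of R induced on V(K) ∪ V(L), and let H[2] be the 2-blow-up of H, i.e., the graph on vertex set V(H) × {1,2} in which (u,i) and (v,j) are adjacent if and only if uv ∈ E(H). Then the vertex set of H[2] can be partitioned into four sets of sizes r, r, t+1, t−1, each inducing a complete graph in H[2]; that is, H[2] contains a spanning subgraph isomorphic to the disjoint union 2K_r ∪ K_{t+1} ∪ K_{t−1}. -/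
/-- Let `r > t ≥ 1` and let `R` contain two vertex-disjoint cliques `K` (of size `r`) and
`L` (of size `t`) such that at least `r - t + 1` vertices of `K` are adjacent to every
vertex of `L`. Then the 2-blow-up of the induced subgraph on `V(K) ∪ V(L)` — whose
adjacency is given by `(u,i) ~ (v,j) ↔ uv ∈ E(R)`, i.e. by `R.comap Prod.fst` on
`(K ∪ L) ×ˢ {1,2}` — has its vertex set partitioned into four cliques of sizes
`r`, `r`, `t+1` and `t-1`; that is, it contains a spanning `2K_r ∪ K_{t+1} ∪ K_{t-1}`. -/
theorem statement14 {V : Type*} [Fintype V] [DecidableEq V] (r t : ℕ)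
    (ht : 1 ≤ t) (hrt : t < r)
    (R : SimpleGraph V) [DecidableRel R.Adj] (K L : Finset V)
    (hdisj : Disjoint K L) (hK : K.card = r) (hL : L.card = t)
    (hKclique : R.IsClique (K : Set V)) (hLclique : R.IsClique (L : Set V))
    (hadj : r - t + 1 ≤ (K.filter fun u => ∀ v ∈ L, R.Adj u v).card) :
    ∃ P : Fin 4 → Finset (V × Fin 2),
      (∀ a b, a ≠ b → Disjoint (P a) (P b)) ∧
      ((K ∪ L) ×ˢ (Finset.univ : Finset (Fin 2)) = P 0 ∪ P 1 ∪ P 2 ∪ P 3) ∧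
      (P 0).card = r ∧ (P 1).card = r ∧ (P 2).card = t + 1 ∧ (P 3).card = t - 1 ∧
      ∀ a, (R.comap Prod.fst).IsClique (P a : Set (V × Fin 2)) := by
  classical
  obtain ⟨S, hSsub, hScard⟩ := Finset.exists_subset_card_eq hadj
  have hSK : S ⊆ K := hSsub.trans (Finset.filter_subset _ _)
  have hSadj : ∀ u ∈ S, ∀ v ∈ L, R.Adj u v := by
    intro u hu v hv
    exact (Finset.mem_filter.mp (hSsub hu)).2 v hv
  have hSpos : 0 < S.card := by omega
  obtain ⟨a, haS⟩ := Finset.card_pos.mp hSpos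
  have haK : a ∈ K := hSK haS
  have hKL : ∀ x ∈ K, x ∉ L := fun x hx => Finset.disjoint_left.mp hdisj hx
  have haL : a ∉ L := hKL a haK
  refine ⟨![K ×ˢ {0}, (S.erase a ∪ L) ×ˢ {1}, L ×ˢ {0} ∪ {(a,1)}, (K \ S) ×ˢ {1}], ?_, ?_, ?_, ?_, ?_, ?_, ?_⟩
  · have d01 : Disjoint (K ×ˢ ({0} : Finset (Fin 2))) ((S.erase a ∪ L) ×ˢ {1}) := by
      rw [Finset.disjoint_left]; rintro ⟨v, k⟩ h1 h2
      simp only [Finset.mem_product, Finset.mem_singleton] at h1 h2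
      rw [h1.2] at h2; exact absurd h2.2 (by decide)
    have d02 : Disjoint (K ×ˢ ({0} : Finset (Fin 2))) (L ×ˢ {0} ∪ {(a,1)}) := by
      rw [Finset.disjoint_left]; rintro ⟨v, k⟩ h1 h2
      simp only [Finset.mem_product, Finset.mem_singleton, Finset.mem_union,
        Prod.mk.injEq] at h1 h2
      rcases h2 with h2 | h2
      · exact hKL v h1.1 h2.1
      · rw [h1.2] at h2; exact absurd h2.2 (by decide)
    have d03 : Disjoint (K ×ˢ ({0} : Finset (Fin 2))) ((K \ S) ×ˢ {1}) := by
      rw [Finset.disjoint_left]; rintro ⟨v, k⟩ h1 h2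
      simp only [Finset.mem_product, Finset.mem_singleton] at h1 h2
      rw [h1.2] at h2; exact absurd h2.2 (by decide)
    have d12 : Disjoint ((S.erase a ∪ L) ×ˢ ({1} : Finset (Fin 2))) (L ×ˢ {0} ∪ {(a,1)}) := by
      rw [Finset.disjoint_left]; rintro ⟨v, k⟩ h1 h2
      simp only [Finset.mem_product, Finset.mem_singleton, Finset.mem_union,
        Finset.mem_erase, Prod.mk.injEq] at h1 h2
      rcases h2 with h2 | h2
      · rw [h1.2] at h2; exact absurd h2.2 (by decide)
      · rcases h1.1 with h | h
        · exact h.1 h2.1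
        · rw [h2.1] at h; exact haL h
    have d13 : Disjoint ((S.erase a ∪ L) ×ˢ ({1} : Finset (Fin 2))) ((K \ S) ×ˢ {1}) := by
      rw [Finset.disjoint_left]; rintro ⟨v, k⟩ h1 h2
      simp only [Finset.mem_product, Finset.mem_singleton, Finset.mem_union,
        Finset.mem_erase, Finset.mem_sdiff] at h1 h2
      rcases h1.1 with h | h
      · exact h2.1.2 h.2
      · exact hKL v h2.1.1 h
    have d23 : Disjoint (L ×ˢ ({0} : Finset (Fin 2)) ∪ {(a,1)}) ((K \ S) ×ˢ {1}) := by
      rw [Finset.disjoint_left]; rintro ⟨v, k⟩ h1 h2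
      simp only [Finset.mem_product, Finset.mem_singleton, Finset.mem_union,
        Finset.mem_sdiff, Prod.mk.injEq] at h1 h2
      rcases h1 with h1 | h1
      · rw [h1.2] at h2; exact absurd h2.2 (by decide)
      · rw [h1.1] at h2; exact h2.1.2 haS
    intro i j hij
    fin_cases i <;> fin_cases j <;>
      simp only [Matrix.cons_val_zero, Matrix.cons_val_one, Matrix.head_cons,
        Matrix.cons_val_two, Matrix.tail_cons, Matrix.cons_val_three] <;>
      first
        | exact absurd rfl hij
        | exact d01 | exact d02 | exact d03 | exact d12 | exact d13 | exact d23
        | exact d01.symm | exact d02.symm | exact d03.symm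
        | exact d12.symm | exact d13.symm | exact d23.symm
  · ext ⟨v, i⟩
    simp only [Finset.mem_product, Finset.mem_union, Finset.mem_singleton,
      Finset.mem_erase, Finset.mem_sdiff, Finset.mem_univ, and_true, Prod.mk.injEq,
      Matrix.cons_val_zero, Matrix.cons_val_one, Matrix.head_cons,
      Matrix.cons_val_two, Matrix.tail_cons, Matrix.cons_val_three]
    have hvS : v ∈ S → v ∈ K := fun h => hSK h
    have hvL : v ∈ L → v ∉ K := fun h hk => hKL v hk h
    fin_cases i <;> simp <;>
      first
        | tauto
        | (by_cases hva : v = a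
           · subst hva; tauto
           · by_cases hvs : v ∈ S <;> tauto)
  · simp [hK]
  · show ((S.erase a ∪ L) ×ˢ ({1} : Finset (Fin 2))).card = r
    rw [Finset.card_product, Finset.card_singleton, mul_one,
      Finset.card_union_of_disjoint, Finset.card_erase_of_mem haS, hScard, hL]
    · omega
    · exact Finset.disjoint_left.mpr fun x hx => hKL x (hSK (Finset.mem_of_mem_erase hx))
  · show (L ×ˢ ({0} : Finset (Fin 2)) ∪ {(a,1)}).card = t + 1
    rw [Finset.card_union_of_disjoint, Finset.card_product, Finset.card_singleton,
      Finset.card_singleton, mul_one, hL]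
    rw [Finset.disjoint_singleton_right]
    simp
  · show ((K \ S) ×ˢ ({1} : Finset (Fin 2))).card = t - 1
    rw [Finset.card_product, Finset.card_singleton, mul_one,
      Finset.card_sdiff_of_subset hSK, hK, hScard]
    omega
  · have key : ∀ (A B : Finset V), A ⊆ K → B ⊆ L → (∀ u ∈ A, ∀ v ∈ B, R.Adj u v) →
        ∀ (i : Fin 2), (R.comap Prod.fst).IsClique (((A ∪ B) ×ˢ {i} : Finset (V × Fin 2)) : Set (V × Fin 2)) := by
      intro A B hA hB hAB i
      rintro ⟨u, k⟩ hu ⟨w, l⟩ hw hne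
      simp only [Finset.coe_product, Finset.coe_union, Finset.coe_singleton,
        Set.mem_prod, Set.mem_union, Set.mem_singleton_iff, Finset.mem_coe] at hu hw
      have hkl : k = l := hu.2.trans hw.2.symm
      have huw : u ≠ w := by rintro rfl; exact hne (by rw [hkl])
      simp only [SimpleGraph.comap_adj]
      rcases hu.1 with hu' | hu' <;> rcases hw.1 with hw' | hw'
      · exact hKclique (hA hu') (hA hw') huw
      · exact hAB u hu' w hw'
      · exact (hAB w hw' u hu').symm
      · exact hLclique (hB hu') (hB hw') huw
    intro k
    fin_cases k
    · show (R.comap Prod.fst).IsClique ((K ×ˢ ({0} : Finset (Fin 2)) : Finset (V × Fin 2)) : Set (V × Fin 2))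
      have := key K ∅ (le_refl K) (Finset.empty_subset L) (by simp) 0
      simpa using this
    · show (R.comap Prod.fst).IsClique (((S.erase a ∪ L) ×ˢ ({1} : Finset (Fin 2)) : Finset (V × Fin 2)) : Set (V × Fin 2))
      exact key (S.erase a) L (fun x hx => hSK (Finset.mem_of_mem_erase hx)) (le_refl L)
        (fun u hu v hv => hSadj u (Finset.mem_of_mem_erase hu) v hv) 1
    · show (R.comap Prod.fst).IsClique (((L ×ˢ ({0} : Finset (Fin 2)) ∪ {(a,1)}) : Finset (V × Fin 2)) : Set (V × Fin 2))
      rintro ⟨u, k⟩ hu ⟨w, l⟩ hw hne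
      simp only [Finset.coe_union, Finset.coe_product, Finset.coe_singleton,
        Set.mem_union, Set.mem_prod, Set.mem_singleton_iff, Finset.mem_coe,
        Prod.mk.injEq] at hu hw
      simp only [SimpleGraph.comap_adj]
      rcases hu with hu | hu <;> rcases hw with hw | hw
      · refine hLclique hu.1 hw.1 ?_
        rintro rfl; exact hne (by rw [hu.2, hw.2])
      · rw [hw.1]; exact (hSadj a haS u hu.1).symm
      · rw [hu.1]; exact hSadj a haS w hw.1
      · exfalso; apply hne; rw [Prod.ext_iff]
        exact ⟨hu.1.trans hw.1.symm, hu.2.trans hw.2.symm⟩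
    · show (R.comap Prod.fst).IsClique (((K \ S) ×ˢ ({1} : Finset (Fin 2)) : Finset (V × Fin 2)) : Set (V × Fin 2))
      have := key (K \ S) ∅ (Finset.sdiff_subset) (Finset.empty_subset L) (by simp) 1
      simpa using this
end

section
/- Let n ≥ 4 be an even integer and let G be an n-vertex graph with σ(G) ≥ n − 2. Then at least one of the following holds: (i) G admits a perfect matching; (ii) G has an independent set of size n/2 + 1; (iii) there exists an odd integer t with 1 ≤ t ≤ n − 1 such that G is isomorphic to the disjoint union of the complete graphs K_t and K_{n−t}. -/
/-!
If `G` has no perfect matching, Tutte's theorem yields a set `S` such that `G - S` has more than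
`|S|` odd components, hence at least `|S| + 2` of them since `n` is even. A vertex of an odd
component `C` has all its neighbours in `S ∪ C`, so `d(x) ≤ |S| + |C| - 1`, and vertices of
distinct odd components are not adjacent; the degree-sum condition then gives
`n ≤ 2|S| + |C| + |D|` for any two odd components `C ≠ D`. Since `S` and the odd components are
disjoint, every odd component other than `C` and `D` is a single vertex. With three or more odd
components all of them are singletons, `n ≤ 2|S| + 2`, and their union is an independent set of
size at least `|S| + 2 ≥ n/2 + 1`. With exactly two, `S = ∅`, the two components cover `G`, and
the degree bound is attained everywhere, so both are cliques.
-/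

open Finset

namespace SimpleGraph

variable {V : Type*} {G : SimpleGraph V}

/-- `parts` abstracts the vertex sets of the odd components of `G - sep`. -/
structure TutteBarrier (G : SimpleGraph V) where
  sep : Finset V
  parts : Finset (Finset V)
  card_sep_add_two_le : #sep + 2 ≤ #parts
  pairwiseDisjoint_parts : (parts : Set (Finset V)).PairwiseDisjoint id
  odd_card : ∀ C ∈ parts, Odd #C
  disjoint_sep : ∀ C ∈ parts, Disjoint sep C
  mem_of_adj : ∀ C ∈ parts, ∀ x ∈ C, ∀ y, G.Adj x y → y ∈ sep ∨ y ∈ C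

namespace TutteBarrier

variable (B : G.TutteBarrier) {C D K : Finset V} {x y : V}

lemma disjoint_of_ne (hC : C ∈ B.parts) (hD : D ∈ B.parts) (hCD : C ≠ D) : Disjoint C D :=
  B.pairwiseDisjoint_parts hC hD hCD

lemma ne_of_mem (hC : C ∈ B.parts) (hD : D ∈ B.parts) (hCD : C ≠ D) (hx : x ∈ C) (hy : y ∈ D) :
    x ≠ y := by
  rintro rfl
  exact Finset.disjoint_left.1 (B.disjoint_of_ne hC hD hCD) hx hy

lemma not_adj (hC : C ∈ B.parts) (hD : D ∈ B.parts) (hCD : C ≠ D) (hx : x ∈ C) (hy : y ∈ D) :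
    ¬ G.Adj x y := fun hxy => by
  rcases B.mem_of_adj C hC x hx y hxy with hy' | hy'
  · exact Finset.disjoint_left.1 (B.disjoint_sep D hD) hy' hy
  · exact Finset.disjoint_left.1 (B.disjoint_of_ne hC hD hCD) hy' hy

lemma sep_eq_empty (h2 : #B.parts = 2) : B.sep = ∅ :=
  card_eq_zero.1 (by have := B.card_sep_add_two_le; omega)

end TutteBarrier

variable [Fintype V]

section ComponentFinset

variable {u : Set V}

open Classical in
noncomputable def componentFinset
    (c : ((⊤ : G.Subgraph).deleteVerts u).coe.ConnectedComponent) : Finset V :=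
  c.supp.toFinset.map (Function.Embedding.subtype _)

variable {c d : ((⊤ : G.Subgraph).deleteVerts u).coe.ConnectedComponent} {v : V}

lemma mem_componentFinset :
    v ∈ componentFinset c ↔
      ∃ h : v ∉ u, ((⊤ : G.Subgraph).deleteVerts u).coe.connectedComponentMk ⟨v, trivial, h⟩ = c := by
  simp [componentFinset, ConnectedComponent.mem_supp_iff]

lemma card_componentFinset : #(componentFinset c) = c.supp.ncard := by
  rw [componentFinset, card_map, ← Set.ncard_coe_finset]
  congr
  simp

lemma eq_of_mem_componentFinset (hc : v ∈ componentFinset c) (hd : v ∈ componentFinset d) :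
    c = d := by
  obtain ⟨_, rfl⟩ := mem_componentFinset.1 hc
  obtain ⟨_, rfl⟩ := mem_componentFinset.1 hd
  rfl

lemma mem_componentFinset_of_adj {w : V} (hv : v ∈ componentFinset c) (hvw : G.Adj v w)
    (hw : w ∉ u) : w ∈ componentFinset c := by
  obtain ⟨hvu, rfl⟩ := mem_componentFinset.1 hv
  exact mem_componentFinset.2 ⟨hw, (ConnectedComponent.connectedComponentMk_eq_of_adj
    (by simp [hvu, hw, hvw])).symm⟩

lemma IsTutteViolator.card_add_two_le (hu : G.IsTutteViolator u)
    (heven : Even (Fintype.card V)) :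
    u.ncard + 2 ≤ ((⊤ : G.Subgraph).deleteVerts u).coe.oddComponents.ncard := by
  have hcard : Nat.card ((⊤ : G.Subgraph).deleteVerts u).verts = Fintype.card V - u.ncard := by
    rw [Subgraph.deleteVerts_verts, Subgraph.verts_top, Nat.card_coe_set_eq,
      ← Set.compl_eq_univ_sdiff, Set.ncard_compl]
    simp
  have hle : u.ncard ≤ Fintype.card V := by
    simpa using Set.ncard_le_ncard (Set.subset_univ u)
  have hparity := odd_ncard_oddComponents ((⊤ : G.Subgraph).deleteVerts u).coe
  rw [hcard, Nat.odd_sub hle] at hparity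
  unfold IsTutteViolator at hu
  simp only [Nat.odd_iff, Nat.even_iff] at hparity heven
  omega

end ComponentFinset

lemma nonempty_tutteBarrier (heven : Even (Fintype.card V))
    (h : ∀ M : G.Subgraph, ¬ M.IsPerfectMatching) : Nonempty G.TutteBarrier := by
  classical
  obtain ⟨u, hu⟩ := exists_isTutteViolator h (by simpa [Nat.card_eq_fintype_card] using heven)
  have injOn : Set.InjOn componentFinset ((⊤ : G.Subgraph).deleteVerts u).coe.oddComponents := by
    intro c hc d _ hcd
    obtain ⟨v, hv⟩ := card_pos.1 (card_componentFinset (c := c) ▸ hc.pos)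
    exact eq_of_mem_componentFinset hv (hcd ▸ hv)
  refine ⟨⟨u.toFinset,
    ((⊤ : G.Subgraph).deleteVerts u).coe.oddComponents.toFinset.image componentFinset,
    ?_, ?_, ?_, ?_, ?_⟩⟩
  · rw [card_image_of_injOn (by simpa using injOn)]
    simpa [Set.ncard_eq_toFinset_card'] using hu.card_add_two_le heven
  · simp only [coe_image, Set.coe_toFinset]
    rintro _ ⟨c, -, rfl⟩ _ ⟨d, -, rfl⟩ hcd
    exact Finset.disjoint_left.2 fun v hc hd =>
      hcd (congrArg componentFinset (eq_of_mem_componentFinset hc hd))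
  · simp only [mem_image, Set.mem_toFinset]
    rintro _ ⟨c, hc, rfl⟩
    rwa [card_componentFinset]
  · simp only [mem_image, Set.mem_toFinset]
    rintro _ ⟨c, -, rfl⟩
    exact Finset.disjoint_right.2 fun v hv => by simpa using (mem_componentFinset.1 hv).1
  · simp only [mem_image, Set.mem_toFinset]
    rintro _ ⟨c, -, rfl⟩ x hx y hxy
    by_cases hyu : y ∈ u
    · exact Or.inl (by simpa using hyu)
    · exact Or.inr (mem_componentFinset_of_adj hx hxy hyu)

namespace TutteBarrier

variable [DecidableEq V] (B : G.TutteBarrier) {C D K : Finset V} {x y : V}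

lemma card_add_card_le (hC : C ∈ B.parts) (hD : D ∈ B.parts) (hCD : C ≠ D) :
    #C + #D ≤ Fintype.card V := by
  rw [← card_union_of_disjoint (B.disjoint_of_ne hC hD hCD)]
  exact card_le_univ _

lemma card_sep_add_sum_card_le : #B.sep + ∑ C ∈ B.parts, #C ≤ Fintype.card V := by
  calc #B.sep + ∑ C ∈ B.parts, #C = #(B.sep ∪ B.parts.biUnion id) := by
        rw [card_union_of_disjoint ((disjoint_biUnion_right _ _ id).2 B.disjoint_sep),
          card_biUnion B.pairwiseDisjoint_parts]
        rfl
    _ ≤ Fintype.card V := card_le_univ _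

variable [DecidableRel G.Adj]

lemma neighborFinset_subset (hC : C ∈ B.parts) (hx : x ∈ C) :
    G.neighborFinset x ⊆ (B.sep ∪ C).erase x := fun y hy => by
  rw [mem_neighborFinset] at hy
  exact mem_erase.2 ⟨hy.ne.symm, mem_union.2 (B.mem_of_adj C hC x hx y hy)⟩

lemma degree_add_one_le (hC : C ∈ B.parts) (hx : x ∈ C) : G.degree x + 1 ≤ #B.sep + #C := by
  have h := card_le_card (B.neighborFinset_subset hC hx)
  rw [card_neighborFinset_eq_degree, card_erase_of_mem (mem_union_right _ hx),
    card_union_of_disjoint (B.disjoint_sep C hC)] at h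
  have := card_pos.2 ⟨x, hx⟩
  omega

lemma card_le_of_ne
    (hσ : ∀ x y, x ≠ y → ¬ G.Adj x y → Fintype.card V ≤ G.degree x + G.degree y + 2)
    (hC : C ∈ B.parts) (hD : D ∈ B.parts) (hCD : C ≠ D) :
    Fintype.card V ≤ 2 * #B.sep + #C + #D := by
  obtain ⟨x, hx⟩ := card_pos.1 (B.odd_card C hC).pos
  obtain ⟨y, hy⟩ := card_pos.1 (B.odd_card D hD).pos
  have := hσ x y (B.ne_of_mem hC hD hCD hx hy) (B.not_adj hC hD hCD hx hy)
  have := B.degree_add_one_le hC hx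
  have := B.degree_add_one_le hD hy
  omega

lemma card_eq_one
    (hσ : ∀ x y, x ≠ y → ¬ G.Adj x y → Fintype.card V ≤ G.degree x + G.degree y + 2)
    (hC : C ∈ B.parts) (hD : D ∈ B.parts) (hCD : C ≠ D) (hK : K ∈ B.parts) (hKC : K ≠ C)
    (hKD : K ≠ D) : #K = 1 := by
  have hDC : D ∈ B.parts.erase C := mem_erase.2 ⟨hCD.symm, hD⟩
  have hKR : K ∈ (B.parts.erase C).erase D := mem_erase.2 ⟨hKD, mem_erase.2 ⟨hKC, hK⟩⟩
  have hsum : #C + (#D + (#K + ∑ E ∈ ((B.parts.erase C).erase D).erase K, #E)) =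
      ∑ E ∈ B.parts, #E := by
    rw [add_sum_erase _ _ hKR, add_sum_erase _ _ hDC, add_sum_erase _ _ hC]
  have hrest : #(((B.parts.erase C).erase D).erase K) ≤
      ∑ E ∈ ((B.parts.erase C).erase D).erase K, #E := by
    simpa using card_nsmul_le_sum _ (fun E => #E) 1
      fun E hE => (B.odd_card E (mem_of_mem_erase (mem_of_mem_erase (mem_of_mem_erase hE)))).pos
  rw [card_erase_of_mem hKR, card_erase_of_mem hDC, card_erase_of_mem hC] at hrest
  have := B.card_le_of_ne hσ hC hD hCD
  have := B.card_sep_add_sum_card_le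
  have := B.card_sep_add_two_le
  have := (B.odd_card K hK).pos
  omega

lemma card_eq_one_of_three_le_card_parts
    (hσ : ∀ x y, x ≠ y → ¬ G.Adj x y → Fintype.card V ≤ G.degree x + G.degree y + 2)
    (h3 : 3 ≤ #B.parts) (hK : K ∈ B.parts) : #K = 1 := by
  obtain ⟨C, hC, D, hD, hCD⟩ := one_lt_card.1 (by rw [card_erase_of_mem hK]; omega :
    1 < #(B.parts.erase K))
  exact B.card_eq_one hσ (mem_of_mem_erase hC) (mem_of_mem_erase hD) hCD hK
    (ne_of_mem_erase hC).symm (ne_of_mem_erase hD).symm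

lemma exists_indep_of_three_le_card_parts
    (hσ : ∀ x y, x ≠ y → ¬ G.Adj x y → Fintype.card V ≤ G.degree x + G.degree y + 2)
    (h3 : 3 ≤ #B.parts) :
    ∃ I : Finset V, Fintype.card V / 2 + 1 ≤ #I ∧ ∀ u ∈ I, ∀ v ∈ I, ¬ G.Adj u v := by
  obtain ⟨C, hC, D, hD, hCD⟩ := one_lt_card.1 (by omega : 1 < #B.parts)
  have hcard := B.card_le_of_ne hσ hC hD hCD
  rw [B.card_eq_one_of_three_le_card_parts hσ h3 hC, B.card_eq_one_of_three_le_card_parts hσ h3 hD] at hcard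
  refine ⟨B.parts.biUnion id, ?_, ?_⟩
  · rw [card_biUnion B.pairwiseDisjoint_parts,
      sum_congr rfl fun K hK => (B.card_eq_one_of_three_le_card_parts hσ h3 hK : #(id K) = 1)]
    have := B.card_sep_add_two_le
    simp only [sum_const, smul_eq_mul, mul_one]
    omega
  · simp only [mem_biUnion, id]
    rintro u ⟨K, hK, hu⟩ v ⟨L, hL, hv⟩
    obtain rfl | hKL := eq_or_ne K L
    · obtain rfl := card_le_one.1 (B.card_eq_one_of_three_le_card_parts hσ h3 hK).le u hu v hv
      exact G.irrefl
    · exact B.not_adj hK hL hKL hu hv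

lemma neighborFinset_eq_erase_of_card_parts_eq_two
    (hσ : ∀ x y, x ≠ y → ¬ G.Adj x y → Fintype.card V ≤ G.degree x + G.degree y + 2)
    (h2 : #B.parts = 2) (hC : C ∈ B.parts) (hx : x ∈ C) : G.neighborFinset x = C.erase x := by
  have hsep := B.sep_eq_empty h2
  obtain ⟨D, hD, hDC⟩ := exists_mem_ne (by omega : 1 < #B.parts) C
  obtain ⟨y, hy⟩ := card_pos.1 (B.odd_card D hD).pos
  refine eq_of_subset_of_card_le (by simpa [hsep] using B.neighborFinset_subset hC hx) ?_
  have := hσ x y (B.ne_of_mem hC hD hDC.symm hx hy) (B.not_adj hC hD hDC.symm hx hy)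
  have := B.degree_add_one_le hD hy
  have := B.card_add_card_le hC hD hDC.symm
  rw [card_erase_of_mem hx, card_neighborFinset_eq_degree]
  rw [hsep, card_empty] at *
  omega

lemma exists_two_cliques_of_card_parts_eq_two
    (hσ : ∀ x y, x ≠ y → ¬ G.Adj x y → Fintype.card V ≤ G.degree x + G.degree y + 2)
    (h2 : #B.parts = 2) :
    ∃ C : Finset V, Odd #C ∧ #C < Fintype.card V ∧
      ∀ u v, G.Adj u v ↔ (u ≠ v ∧ (u ∈ C ↔ v ∈ C)) := by
  obtain ⟨C, D, hCD, hparts⟩ := card_eq_two.1 h2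
  have hC : C ∈ B.parts := hparts ▸ mem_insert_self C {D}
  have hD : D ∈ B.parts := hparts ▸ mem_insert_of_mem (mem_singleton_self D)
  have hsep := B.sep_eq_empty h2
  have hcover : ∀ w, w ∉ C → w ∈ D := by
    have hunion : C ∪ D = univ := by
      refine eq_univ_of_card _ (le_antisymm (card_le_univ _) ?_)
      rw [card_union_of_disjoint (B.disjoint_of_ne hC hD hCD)]
      simpa [hsep] using B.card_le_of_ne hσ hC hD hCD
    intro w hw
    have hw' : w ∈ C ∪ D := hunion ▸ mem_univ w
    exact (mem_union.1 hw').resolve_left hw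
  have hclosed : ∀ u v, G.Adj u v → u ∈ C → v ∈ C := fun u v h hu => by
    simpa [hsep] using B.mem_of_adj C hC u hu v h
  have hadj : ∀ E ∈ B.parts, ∀ u ∈ E, ∀ v ∈ E, u ≠ v → G.Adj u v := fun E hE u hu v hv huv => by
    rw [← mem_neighborFinset, B.neighborFinset_eq_erase_of_card_parts_eq_two hσ h2 hE hu]
    exact mem_erase.2 ⟨huv.symm, hv⟩
  refine ⟨C, B.odd_card C hC, ?_, fun u v => ⟨fun h => ⟨h.ne, hclosed u v h, hclosed v u h.symm⟩, ?_⟩⟩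
  · have := B.card_add_card_le hC hD hCD
    have := (B.odd_card D hD).pos
    omega
  · rintro ⟨huv, hiff⟩
    by_cases hu : u ∈ C
    · exact hadj C hC u hu v (hiff.1 hu) huv
    · exact hadj D hD u (hcover u hu) v (hcover v (hiff.not.1 hu)) huv

end TutteBarrier

end SimpleGraph

theorem statement18_general (n : ℕ) (heven : Even n)
    (G : SimpleGraph (Fin n)) [DecidableRel G.Adj]
    (hσ : ∀ x y : Fin n, x ≠ y → ¬ G.Adj x y → n ≤ G.degree x + G.degree y + 2) :
    (∃ M : G.Subgraph, M.IsPerfectMatching) ∨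
    (∃ S : Finset (Fin n), S.card = n / 2 + 1 ∧ ∀ u ∈ S, ∀ v ∈ S, ¬ G.Adj u v) ∨
    (∃ (t : ℕ) (C : Finset (Fin n)), Odd t ∧ 1 ≤ t ∧ t ≤ n - 1 ∧ C.card = t ∧
      ∀ u v : Fin n, G.Adj u v ↔ (u ≠ v ∧ (u ∈ C ↔ v ∈ C))) := by
  by_cases hM : ∃ M : G.Subgraph, M.IsPerfectMatching
  · exact Or.inl hM
  replace hσ : ∀ x y, x ≠ y → ¬ G.Adj x y → Fintype.card (Fin n) ≤ G.degree x + G.degree y + 2 := by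
    simpa using hσ
  obtain ⟨B⟩ := SimpleGraph.nonempty_tutteBarrier (by simpa using heven) fun M hM' => hM ⟨M, hM'⟩
  rcases (show 2 ≤ #B.parts by have := B.card_sep_add_two_le; omega).eq_or_lt with h2 | h3
  · obtain ⟨C, hodd, hlt, hadj⟩ := B.exists_two_cliques_of_card_parts_eq_two hσ h2.symm
    rw [Fintype.card_fin] at hlt
    exact Or.inr (Or.inr ⟨#C, C, hodd, hodd.pos, by omega, rfl, hadj⟩)
  · obtain ⟨I, hI, hind⟩ := B.exists_indep_of_three_le_card_parts hσ h3
    rw [Fintype.card_fin] at hI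
    obtain ⟨J, hJI, hJ⟩ := exists_subset_card_eq hI
    exact Or.inr (Or.inl ⟨J, hJ, fun u hu v hv => hind u (hJI hu) v (hJI hv)⟩)

/-- Let `n ≥ 4` be even and let `G` be an `n`-vertex graph with `σ(G) ≥ n - 2`. Then
(i) `G` admits a perfect matching, or (ii) `G` has an independent set of size `n/2 + 1`,
or (iii) there is an odd `t` with `1 ≤ t ≤ n - 1` such that `G` is isomorphic to the
disjoint union `K_t ∪ K_{n-t}` — i.e. there is a `t`-element vertex set `C` such that two
distinct vertices are adjacent exactly when they lie on the same side of `{C, Cᶜ}`. -/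
theorem statement18 (n : ℕ) (hn : 4 ≤ n) (heven : Even n)
    (G : SimpleGraph (Fin n)) [DecidableRel G.Adj]
    (hσ : ∀ x y : Fin n, x ≠ y → ¬ G.Adj x y → n ≤ G.degree x + G.degree y + 2) :
    (∃ M : G.Subgraph, M.IsPerfectMatching) ∨
    (∃ S : Finset (Fin n), S.card = n / 2 + 1 ∧ ∀ u ∈ S, ∀ v ∈ S, ¬ G.Adj u v) ∨
    (∃ (t : ℕ) (C : Finset (Fin n)), Odd t ∧ 1 ≤ t ∧ t ≤ n - 1 ∧ C.card = t ∧
      ∀ u v : Fin n, G.Adj u v ↔ (u ≠ v ∧ (u ∈ C ↔ v ∈ C))) :=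
  statement18_general n heven G hσ
end
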